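/- arXiv:1805.08204 — 3 statements merged into one kernel-verified Lean document; each statement's English description precedes it below -/
import Mathlib

section
/- Fix y ∈ ℝⁿ and an integer d ≥ 1, and let f₁(x) = Σ_{i₁,…,i_d=1}^n |x_{i₁}⋯x_{i_d} − y_{i₁}⋯y_{i_d}|. If x ∈ ℝⁿ is a first-order stationary point of f₁ in the sense of the Clarke subdifferential (0 ∈ ∂f₁(x)), then: (1) for each i with yᵢ = 0 one has xᵢ = 0; (2) for all i₁,…,i_d ∈ {1,…,n} with y_{i₁}⋯y_{i_d} ≠ 0, (x_{i₁}⋯x_{i_d})/(y_{i₁}⋯y_{i_d}) ≤ 1. -/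
open Filter

/-- The Clarke generalized directional derivative
`f°(x; v) = limsup_{y→x, λ↓0} (f(y + λv) − f(y))/λ`. -/
noncomputable def clarkeDirDeriv {n : ℕ} (f : EuclideanSpace ℝ (Fin n) → ℝ)
    (x v : EuclideanSpace ℝ (Fin n)) : ℝ :=
  Filter.limsup
    (fun p : EuclideanSpace ℝ (Fin n) × ℝ => (f (p.1 + p.2 • v) - f p.1) / p.2)
    ((nhds x) ×ˢ (nhdsWithin 0 (Set.Ioi 0)))

/-- The Clarke subdifferential `∂f(x) = { d : ⟨v, d⟩ ≤ f°(x; v) for all v }`. -/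
def clarkeSubdiff {n : ℕ} (f : EuclideanSpace ℝ (Fin n) → ℝ)
    (x : EuclideanSpace ℝ (Fin n)) : Set (EuclideanSpace ℝ (Fin n)) :=
  { d | ∀ v : EuclideanSpace ℝ (Fin n), (inner ℝ v d : ℝ) ≤ clarkeDirDeriv f x v }

section AuxOpen
open Finset Function

namespace Stmt16

variable {n d : ℕ}

def Aval (x : Fin n → ℝ) (i : Fin d → Fin n) : ℝ := ∏ k, x (i k)
def Xval (x : Fin n → ℝ) (i : Fin d → Fin n) (k : Fin d) : ℝ :=
  ∏ l ∈ Finset.univ.erase k, x (i l)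
def gco (x : Fin n → ℝ) (i : Fin d → Fin n) (j : Fin n) : ℝ :=
  ∑ k, if i k = j then Xval x i k else 0

lemma Aval_eq_mul_Xval (x : Fin n → ℝ) (i : Fin d → Fin n) (k : Fin d) :
    Aval x i = x (i k) * Xval x i k :=
  (Finset.mul_prod_erase Finset.univ (fun l => x (i l)) (Finset.mem_univ k)).symm

lemma Xval_update (x : Fin n → ℝ) (i : Fin d → Fin n) (k : Fin d) (l : Fin n) :
    Xval x (update i k l) k = Xval x i k := by
  refine Finset.prod_congr rfl fun m hm => ?_
  rw [update_of_ne (Finset.mem_erase.mp hm).1]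

section Core
variable (x y : Fin n → ℝ) (t : (Fin d → Fin n) → ℝ)

lemma termwise
    (ht1 : ∀ i, |t i| ≤ 1)
    (ht2 : ∀ i, Aval x i ≠ Aval y i → t i = if Aval y i < Aval x i then 1 else -1)
    (hy : ∀ j, 0 ≤ y j) (hxy : ∀ j, y j = 0 → x j = 0)
    {j l : Fin n} (hyj : 0 < y j) (hyl : 0 < y l) (hρ : x l * y j < x j * y l)
    (k : Fin d) (i : Fin d → Fin n) (hik : i k = j) :
    0 ≤ (t i - t (update i k l)) * Xval x i k := by
  rcases eq_or_ne (Xval x i k) 0 with hX | hX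
  · simp [hX]
  -- basic positivity facts
  have hxm : ∀ m ∈ Finset.univ.erase k, x (i m) ≠ 0 := by
    rw [Xval, Finset.prod_ne_zero_iff] at hX; exact hX
  have hY : 0 < Xval y i k := by
    refine Finset.prod_pos fun m hm => ?_
    rcases (hy (i m)).lt_or_eq with h | h
    · exact h
    · exact absurd (hxy _ h.symm) (hxm m hm)
  set i' := update i k l with hi'
  have hXe : Xval x i' k = Xval x i k := Xval_update x i k l
  have hYe : Xval y i' k = Xval y i k := Xval_update y i k l
  have hai : Aval x i = x j * Xval x i k := by rw [Aval_eq_mul_Xval x i k, hik]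
  have hci : Aval y i = y j * Xval y i k := by rw [Aval_eq_mul_Xval y i k, hik]
  have hai' : Aval x i' = x l * Xval x i k := by
    rw [Aval_eq_mul_Xval x i' k, hi', update_self, hXe]
  have hci' : Aval y i' = y l * Xval y i k := by
    rw [Aval_eq_mul_Xval y i' k, hi', update_self, hYe]
  have habs := abs_le.mp (ht1 i)
  have habs' := abs_le.mp (ht1 i')
  rcases hX.lt_or_gt with hXneg | hXpos
  · -- X < 0 : show t i ≤ t i'
    have key : Aval y i ≤ Aval x i → Aval y i' < Aval x i' := by
      intro h
      have h1 : Aval x i' * y j = Aval x i * y l - Xval x i k * (x j * y l - x l * y j) := by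
        rw [hai, hai']; ring
      have h2 : Aval y i * y l = Aval y i' * y j := by rw [hci, hci']; ring
      have h3 : Aval y i' * y j < Aval x i' * y j := by
        rw [h1, ← h2]
        have : 0 < (-(Xval x i k)) * (x j * y l - x l * y j) := by
          apply mul_pos (by linarith) (by linarith)
        nlinarith [mul_le_mul_of_nonneg_right h hyl.le]
      exact lt_of_mul_lt_mul_right h3 hyj.le
    have main : t i ≤ t i' := by
      by_cases hne : Aval x i = Aval y i
      · -- tie at i; then strict at i' cannot be on the low side
        have h' : Aval y i' < Aval x i' := key (le_of_eq hne.symm)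
        have : t i' = 1 := by rw [ht2 i' (ne_of_gt h'), if_pos h']
        rw [this]; exact habs.2
      · rcases lt_or_gt_of_ne hne with hlt | hgt
        · -- a i < c i : t i = -1
          have : t i = -1 := by rw [ht2 i hne, if_neg (not_lt.mpr hlt.le)]
          rw [this]; exact habs'.1
        · have h' : Aval y i' < Aval x i' := key hgt.le
          have : t i' = 1 := by rw [ht2 i' (ne_of_gt h'), if_pos h']
          rw [this]; exact habs.2
    have : t i - t i' ≤ 0 := by linarith
    exact mul_nonneg_of_nonpos_of_nonpos this hXneg.le
  · -- 0 < X : show t i' ≤ t i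
    have key : Aval y i' ≤ Aval x i' → Aval y i < Aval x i := by
      intro h
      have h1 : Aval x i * y l = Aval x i' * y j + Xval x i k * (x j * y l - x l * y j) := by
        rw [hai, hai']; ring
      have h2 : Aval y i * y l = Aval y i' * y j := by rw [hci, hci']; ring
      have h3 : Aval y i * y l < Aval x i * y l := by
        rw [h1, h2]
        have : 0 < Xval x i k * (x j * y l - x l * y j) := by
          apply mul_pos hXpos (by linarith)
        nlinarith [mul_le_mul_of_nonneg_right h hyj.le]
      exact lt_of_mul_lt_mul_right h3 hyl.le
    have main : t i' ≤ t i := by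
      by_cases hne' : Aval x i' = Aval y i'
      · have h' : Aval y i < Aval x i := key (le_of_eq hne'.symm)
        have : t i = 1 := by rw [ht2 i (ne_of_gt h'), if_pos h']
        rw [this]; exact habs'.2
      · rcases lt_or_gt_of_ne hne' with hlt | hgt
        · have : t i' = -1 := by rw [ht2 i' hne', if_neg (not_lt.mpr hlt.le)]
          rw [this]; exact habs.1
        · have h' : Aval y i < Aval x i := key hgt.le
          have : t i = 1 := by rw [ht2 i (ne_of_gt h'), if_pos h']
          rw [this]; exact habs'.2
    exact mul_nonneg (by linarith) hXpos.le


lemma row_swap (j : Fin n) :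
    ∑ i, t i * gco x i j
      = ∑ k : Fin d, ∑ i ∈ Finset.univ.filter (fun i : Fin d → Fin n => i k = j),
          t i * Xval x i k := by
  simp_rw [gco, Finset.mul_sum, mul_ite, mul_zero]
  rw [Finset.sum_comm]
  exact Finset.sum_congr rfl fun k _ => (Finset.sum_filter _ _).symm

lemma row_swap_update {j : Fin n} (l : Fin n) :
    ∑ i, t i * gco x i l
      = ∑ k : Fin d, ∑ i ∈ Finset.univ.filter (fun i : Fin d → Fin n => i k = j),
          t (update i k l) * Xval x i k := by
  rw [row_swap x t l]
  refine Finset.sum_congr rfl fun k _ => ?_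
  refine Finset.sum_bij' (fun i _ => update i k j) (fun i _ => update i k l) ?_ ?_ ?_ ?_ ?_
  · intro i hi
    simp [Finset.mem_filter]
  · intro i hi
    simp [Finset.mem_filter]
  · intro i hi
    rw [Finset.mem_filter] at hi
    show update (update i k j) k l = i
    rw [update_idem, ← hi.2, update_eq_self]
  · intro i hi
    rw [Finset.mem_filter] at hi
    show update (update i k l) k j = i
    rw [update_idem, ← hi.2, update_eq_self]
  · intro i hi
    rw [Finset.mem_filter] at hi
    show t i * Xval x i k = t (update (update i k j) k l) * Xval x (update i k j) k
    rw [update_idem]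
    congr 1
    · rw [← hi.2, update_eq_self]
    · exact (Xval_update x i k j).symm

lemma colconst_lt
    (ht1 : ∀ i, |t i| ≤ 1)
    (ht2 : ∀ i, Aval x i ≠ Aval y i → t i = if Aval y i < Aval x i then 1 else -1)
    (hy : ∀ j, 0 ≤ y j) (hxy : ∀ j, y j = 0 → x j = 0)
    (hrow : ∀ j, ∑ i, t i * gco x i j = 0)
    {j l : Fin n} (hyj : 0 < y j) (hyl : 0 < y l) (hρ : x l * y j < x j * y l)
    (k : Fin d) (i : Fin d → Fin n) (hik : i k = j) (hX : Xval x i k ≠ 0) :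
    t i = t (update i k l) := by
  have hsum : ∑ k : Fin d, ∑ i ∈ Finset.univ.filter (fun i : Fin d → Fin n => i k = j),
      (t i - t (update i k l)) * Xval x i k = 0 := by
    simp_rw [sub_mul, Finset.sum_sub_distrib]
    rw [← row_swap x t j, ← row_swap_update x t (j := j) l, hrow j, hrow l, sub_zero]
  have hnn : ∀ k : Fin d, ∀ i ∈ Finset.univ.filter (fun i : Fin d → Fin n => i k = j),
      0 ≤ (t i - t (update i k l)) * Xval x i k := by
    intro k i hi
    rw [Finset.mem_filter] at hi
    exact termwise x y t ht1 ht2 hy hxy hyj hyl hρ k i hi.2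
  have hz1 : ∀ k ∈ (Finset.univ : Finset (Fin d)),
      ∑ i ∈ Finset.univ.filter (fun i : Fin d → Fin n => i k = j),
        (t i - t (update i k l)) * Xval x i k = 0 := by
    rw [← Finset.sum_eq_zero_iff_of_nonneg]
    · exact hsum
    · intro k _
      exact Finset.sum_nonneg (hnn k)
  have hz2 := (Finset.sum_eq_zero_iff_of_nonneg (hnn k)).mp
      (hz1 k (Finset.mem_univ k)) i (by simpa [Finset.mem_filter] using hik)
  rcases mul_eq_zero.mp hz2 with h | h
  · linarith [sub_eq_zero.mp h]
  · exact absurd h hX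

lemma colconst_ne
    (ht1 : ∀ i, |t i| ≤ 1)
    (ht2 : ∀ i, Aval x i ≠ Aval y i → t i = if Aval y i < Aval x i then 1 else -1)
    (hy : ∀ j, 0 ≤ y j) (hxy : ∀ j, y j = 0 → x j = 0)
    (hrow : ∀ j, ∑ i, t i * gco x i j = 0)
    {j l : Fin n} (hyj : 0 < y j) (hyl : 0 < y l) (hne : x l * y j ≠ x j * y l)
    (k : Fin d) (i : Fin d → Fin n) (hik : i k = j) (hX : Xval x i k ≠ 0) :
    t i = t (update i k l) := by
  rcases lt_or_gt_of_ne hne with h | h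
  · exact colconst_lt x y t ht1 ht2 hy hxy hrow hyj hyl h k i hik hX
  · have h2 := colconst_lt x y t ht1 ht2 hy hxy hrow hyl hyj h k (update i k l)
      (update_self k l i) (by rw [Xval_update]; exact hX)
    rw [update_idem, ← hik, update_eq_self] at h2
    exact h2.symm

lemma colconst
    (ht1 : ∀ i, |t i| ≤ 1)
    (ht2 : ∀ i, Aval x i ≠ Aval y i → t i = if Aval y i < Aval x i then 1 else -1)
    (hy : ∀ j, 0 ≤ y j) (hxy : ∀ j, y j = 0 → x j = 0)
    (hrow : ∀ j, ∑ i, t i * gco x i j = 0)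
    (hH1 : ∃ p q, 0 < y p ∧ 0 < y q ∧ x p * y q ≠ x q * y p)
    {j l : Fin n} (hyj : 0 < y j) (hyl : 0 < y l)
    (k : Fin d) (i : Fin d → Fin n) (hik : i k = j) (hX : Xval x i k ≠ 0) :
    t i = t (update i k l) := by
  rcases eq_or_ne (x l * y j) (x j * y l) with heq | hne
  swap
  · exact colconst_ne x y t ht1 ht2 hy hxy hrow hyj hyl hne k i hik hX
  -- the two ratios agree; find a third coordinate with a different ratio
  obtain ⟨p, q, hyp, hyq, hpq⟩ := hH1
  have hm : ∃ m, 0 < y m ∧ x m * y j ≠ x j * y m := by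
    by_cases hp : x p * y j = x j * y p
    · refine ⟨q, hyq, fun hq : x q * y j = x j * y q => hpq ?_⟩
      have : (x p * y q) * y j = (x q * y p) * y j := by
        calc (x p * y q) * y j = (x p * y j) * y q := by ring
        _ = (x j * y p) * y q := by rw [hp]
        _ = (x j * y q) * y p := by ring
        _ = (x q * y j) * y p := by rw [hq]
        _ = (x q * y p) * y j := by ring
      exact mul_right_cancel₀ (ne_of_gt hyj) this
    · exact ⟨p, hyp, hp⟩
  obtain ⟨m, hym, hmj⟩ := hm
  have hml : x m * y l ≠ x l * y m := by
    intro hq2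
    apply hmj
    have : (x m * y j) * y l = (x j * y m) * y l := by
      calc (x m * y j) * y l = (x m * y l) * y j := by ring
      _ = (x l * y m) * y j := by rw [hq2]
      _ = (x l * y j) * y m := by ring
      _ = (x j * y l) * y m := by rw [heq]
      _ = (x j * y m) * y l := by ring
    exact mul_right_cancel₀ (ne_of_gt hyl) this
  have h1 : t i = t (update i k m) :=
    colconst_ne x y t ht1 ht2 hy hxy hrow hyj hym hmj k i hik hX
  have h2 : t (update i k l) = t (update i k m) := by
    have := colconst_ne x y t ht1 ht2 hy hxy hrow hyl hym hml k (update i k l)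
      (update_self k l i) (by rw [Xval_update]; exact hX)
    rw [update_idem] at this
    exact this
  rw [h1, h2]


lemma tconst
    (ht1 : ∀ i, |t i| ≤ 1)
    (ht2 : ∀ i, Aval x i ≠ Aval y i → t i = if Aval y i < Aval x i then 1 else -1)
    (hy : ∀ j, 0 ≤ y j) (hxy : ∀ j, y j = 0 → x j = 0)
    (hrow : ∀ j, ∑ i, t i * gco x i j = 0)
    (hH1 : ∃ p q, 0 < y p ∧ 0 < y q ∧ x p * y q ≠ x q * y p)
    (s : Finset (Fin d)) :
    ∀ (i i' : Fin d → Fin n), (∀ k, x (i k) ≠ 0) → (∀ k, x (i' k) ≠ 0) →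
      (∀ k ∉ s, i k = i' k) → t i = t i' := by
  have hypos : ∀ jj, x jj ≠ 0 → 0 < y jj := fun jj hx =>
    (hy jj).lt_of_ne fun h0 => hx (hxy jj h0.symm)
  induction s using Finset.induction_on with
  | empty =>
      intro i i' _ _ h
      congr 1
      funext k
      exact h k (Finset.notMem_empty k)
  | @insert a s ha ih =>
      intro i i' hi hi' hagree
      by_cases hval : i a = i' a
      · refine ih i i' hi hi' fun k hk => ?_
        by_cases h : k = a
        · rwa [h]
        · exact hagree k (by simp [Finset.mem_insert, h, hk])
      · have hX : Xval x i a ≠ 0 := by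
          rw [Xval, Finset.prod_ne_zero_iff]; exact fun m _ => hi m
        have h1 : t i = t (update i a (i' a)) :=
          colconst x y t ht1 ht2 hy hxy hrow hH1 (hypos _ (hi a)) (hypos _ (hi' a))
            a i rfl hX
        have hi''nz : ∀ k, x (update i a (i' a) k) ≠ 0 := by
          intro k
          by_cases h : k = a
          · rw [h, update_self]; exact hi' a
          · rw [update_of_ne h]; exact hi k
        have h2 : t (update i a (i' a)) = t i' := by
          refine ih _ i' hi''nz hi' fun k hk => ?_
          by_cases h : k = a
          · rw [h, update_self]
          · rw [update_of_ne h]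
            exact hagree k (by simp [Finset.mem_insert, h, hk])
        rw [h1, h2]

lemma row_eval (HT : ∀ i, (∀ k, x (i k) ≠ 0) → t i = 1) (j0 : Fin n) (hj0 : x j0 ≠ 0) :
    ∑ i, t i * gco x i j0 = (d : ℝ) * (∑ j, x j) ^ (d - 1) := by
  rw [row_swap x t j0]
  have hk : ∀ k : Fin d,
      (∑ i ∈ Finset.univ.filter (fun i : Fin d → Fin n => i k = j0), t i * Xval x i k)
        = (∑ j, x j) ^ (d - 1) := by
    intro k
    have step1 : ∀ i ∈ Finset.univ.filter (fun i : Fin d → Fin n => i k = j0),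
        t i * Xval x i k = Xval x i k := by
      intro i hi
      rcases eq_or_ne (Xval x i k) 0 with h | h
      · rw [h, mul_zero]
      · have hIk : i k = j0 := (Finset.mem_filter.mp hi).2
        have hnz : ∀ m, x (i m) ≠ 0 := by
          intro m
          by_cases hm : m = k
          · subst hm; rw [hIk]; exact hj0
          · exact (Finset.prod_ne_zero_iff.mp h) m
              (Finset.mem_erase.mpr ⟨hm, Finset.mem_univ m⟩)
        rw [HT i hnz, one_mul]
    rw [Finset.sum_congr rfl step1, Finset.sum_filter]
    set F : Fin d → Fin n → ℝ :=
      fun m jj => if m = k then (if jj = j0 then (1 : ℝ) else 0) else x jj with hF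
    have key : ∀ i : Fin d → Fin n,
        (if i k = j0 then Xval x i k else 0) = ∏ m, F m (i m) := by
      intro i
      have e1 : ∏ m, F m (i m) = F k (i k) * ∏ m ∈ Finset.univ.erase k, F m (i m) :=
        (Finset.mul_prod_erase Finset.univ (fun m => F m (i m)) (Finset.mem_univ k)).symm
      have e2 : ∏ m ∈ Finset.univ.erase k, F m (i m) = Xval x i k := by
        refine Finset.prod_congr rfl fun m hm => ?_
        rw [hF]
        simp only [if_neg (Finset.mem_erase.mp hm).1]
      have e3 : F k (i k) = if i k = j0 then (1 : ℝ) else 0 := by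
        rw [hF]; simp only [if_pos rfl, if_true]
      rw [e1, e2, e3, ite_mul, one_mul, zero_mul]
    rw [Finset.sum_congr rfl fun i _ => key i]
    have swap := Finset.prod_univ_sum (fun _ : Fin d => (Finset.univ : Finset (Fin n))) F
    rw [Fintype.piFinset_univ] at swap
    rw [← swap]
    have e1 : ∏ m, (∑ jj, F m jj)
        = (∑ jj, F k jj) * ∏ m ∈ Finset.univ.erase k, (∑ jj, F m jj) :=
      (Finset.mul_prod_erase Finset.univ (fun m => ∑ jj, F m jj) (Finset.mem_univ k)).symm
    have e2 : (∑ jj, F k jj) = 1 := by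
      rw [hF]
      simp only [if_pos rfl, if_true]
      rw [Finset.sum_ite_eq' Finset.univ j0 (fun _ => (1 : ℝ))]
      simp
    have e3 : ∏ m ∈ Finset.univ.erase k, (∑ jj, F m jj) = (∑ j, x j) ^ (d - 1) := by
      have : ∀ m ∈ Finset.univ.erase k, (∑ jj, F m jj) = ∑ j, x j := by
        intro m hm
        rw [hF]
        simp only [if_neg (Finset.mem_erase.mp hm).1]
      rw [Finset.prod_congr rfl this, Finset.prod_const, Finset.card_erase_of_mem
        (Finset.mem_univ k), Finset.card_univ, Fintype.card_fin]
    rw [e1, e2, e3, one_mul]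
  rw [Finset.sum_congr rfl fun k _ => hk k, Finset.sum_const, Finset.card_univ,
    Fintype.card_fin, nsmul_eq_mul]


lemma core (hd : 1 ≤ d)
    (hy : ∀ j, 0 ≤ y j) (hxy : ∀ j, y j = 0 → x j = 0)
    (ht1 : ∀ i, |t i| ≤ 1)
    (ht2 : ∀ i, Aval x i ≠ Aval y i → t i = if Aval y i < Aval x i then 1 else -1)
    (hrow : ∀ j, ∑ i, t i * gco x i j = 0)
    (iv : Fin d → Fin n) (h1 : Aval y iv ≠ 0) (h2 : 1 < Aval x iv / Aval y iv) :
    False := by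
  have hypos : ∀ jj, x jj ≠ 0 → 0 < y jj := fun jj hx =>
    (hy jj).lt_of_ne fun h0 => hx (hxy jj h0.symm)
  have hxK : ∀ k, x (iv k) ≠ 0 := by
    have hA : Aval x iv ≠ 0 := by
      intro h; rw [h, zero_div] at h2; linarith
    rw [Aval, Finset.prod_ne_zero_iff] at hA
    exact fun k => hA k (Finset.mem_univ k)
  have hcpos : 0 < Aval y iv :=
    (Finset.prod_nonneg fun k _ => hy _).lt_of_ne (Ne.symm h1)
  have haviol : Aval y iv < Aval x iv := by
    rw [lt_div_iff₀ hcpos, one_mul] at h2; exact h2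
  have htiv : t iv = 1 := by rw [ht2 iv (ne_of_gt haviol), if_pos haviol]
  have HT : ∀ i : Fin d → Fin n, (∀ k, x (i k) ≠ 0) → t i = 1 := by
    by_cases hH1 : ∃ p q, 0 < y p ∧ 0 < y q ∧ x p * y q ≠ x q * y p
    · intro i hi
      rw [tconst x y t ht1 ht2 hy hxy hrow hH1 Finset.univ i iv hi hxK
        (fun k hk => absurd (Finset.mem_univ k) hk), htiv]
    · push_neg at hH1
      intro i hi
      have hprod : Aval x i * Aval y iv = Aval x iv * Aval y i := by
        rw [Aval, Aval, Aval, Aval, ← Finset.prod_mul_distrib, ← Finset.prod_mul_distrib]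
        exact Finset.prod_congr rfl fun k _ =>
          hH1 (i k) (iv k) (hypos _ (hi k)) (hypos _ (hxK k))
      have hcip : 0 < Aval y i := Finset.prod_pos fun k _ => hypos _ (hi k)
      have hlt : Aval y i < Aval x i := by
        have h3 : Aval y i * Aval y iv < Aval x i * Aval y iv := by
          rw [hprod]
          calc Aval y i * Aval y iv < Aval y i * Aval x iv :=
                (mul_lt_mul_iff_right₀ hcip).mpr haviol
          _ = Aval x iv * Aval y i := by ring
        exact lt_of_mul_lt_mul_right h3 hcpos.le
      rw [ht2 i (ne_of_gt hlt), if_pos hlt]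
  have HA : ∀ i : Fin d → Fin n, (∀ k, x (i k) ≠ 0) → Aval y i ≤ Aval x i := by
    intro i hi
    by_cases h : Aval x i = Aval y i
    · exact le_of_eq h.symm
    · by_contra hlt
      push_neg at hlt
      have h4 := ht2 i h
      rw [if_neg (not_lt.mpr hlt.le), HT i hi] at h4
      norm_num at h4
  -- the row equation forces the sum of x to vanish (and d ≥ 2)
  have hrow0 : (0 : ℝ) = (d : ℝ) * (∑ j, x j) ^ (d - 1) := by
    rw [← row_eval x t HT (iv ⟨0, hd⟩) (hxK _), hrow (iv ⟨0, hd⟩)]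
  have hdR : (d : ℝ) ≠ 0 := Nat.cast_ne_zero.mpr (by omega)
  have hpow : (∑ j, x j) ^ (d - 1) = 0 := by
    rcases mul_eq_zero.mp hrow0.symm with h | h
    · exact absurd h hdR
    · exact h
  obtain ⟨hSx, hd1⟩ := pow_eq_zero_iff'.mp hpow
  have hd0 : d ≠ 0 := by omega
  set Kf := Finset.univ.filter (fun j => x j ≠ 0) with hKf
  have hSxK : ∑ j ∈ Kf, x j = 0 := by
    rw [hKf, Finset.sum_filter_ne_zero]; exact hSx
  have hmem : ∀ i : Fin d → Fin n,
      i ∈ Fintype.piFinset (fun _ : Fin d => Kf) ↔ ∀ k, x (i k) ≠ 0 := by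
    intro i
    rw [Fintype.mem_piFinset]
    simp [hKf]
  have hsum_lt : (∑ i ∈ Fintype.piFinset (fun _ : Fin d => Kf), Aval y i)
      < ∑ i ∈ Fintype.piFinset (fun _ : Fin d => Kf), Aval x i :=
    Finset.sum_lt_sum (fun i hi => HA i ((hmem i).mp hi))
      ⟨iv, (hmem iv).mpr hxK, haviol⟩
  have hxprod : (∑ i ∈ Fintype.piFinset (fun _ : Fin d => Kf), Aval x i)
      = (∑ j ∈ Kf, x j) ^ d := by
    have h := Finset.prod_univ_sum (fun _ : Fin d => Kf) (fun (_ : Fin d) (j : Fin n) => x j)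
    rw [Finset.prod_const, Finset.card_univ, Fintype.card_fin] at h
    simp only [Aval]
    exact h.symm
  have hyprod : (∑ i ∈ Fintype.piFinset (fun _ : Fin d => Kf), Aval y i)
      = (∑ j ∈ Kf, y j) ^ d := by
    have h := Finset.prod_univ_sum (fun _ : Fin d => Kf) (fun (_ : Fin d) (j : Fin n) => y j)
    rw [Finset.prod_const, Finset.card_univ, Fintype.card_fin] at h
    simp only [Aval]
    exact h.symm
  rw [hxprod, hyprod, hSxK, zero_pow hd0] at hsum_lt
  have hSyK : (∑ j ∈ Kf, y j) ≠ 0 := by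
    intro h; rw [h, zero_pow hd0] at hsum_lt; exact lt_irrefl _ hsum_lt
  have hd2 : 2 ≤ d := by omega
  set p0 : Fin d := ⟨0, by omega⟩ with hp0
  set p1 : Fin d := ⟨1, by omega⟩ with hp1
  have hp01 : p0 ≠ p1 := by
    simp [hp0, hp1, Fin.ext_iff]
  have hupd : ∀ (z : Fin n → ℝ) (k' k'' : Fin n),
      Aval z (update (update iv p0 k') p1 k'')
        = z k' * (z k'' * ∏ l ∈ (Finset.univ.erase p0).erase p1, z (iv l)) := by
    intro z k' k''
    have e0 : Aval z (update (update iv p0 k') p1 k'')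
        = z k' * ∏ l ∈ Finset.univ.erase p0,
            z (update (update iv p0 k') p1 k'' l) := by
      have := (Finset.mul_prod_erase Finset.univ
        (fun l => z (update (update iv p0 k') p1 k'' l)) (Finset.mem_univ p0)).symm
      rw [Aval, this, update_of_ne hp01, update_self]
    have e1 : (∏ l ∈ Finset.univ.erase p0, z (update (update iv p0 k') p1 k'' l))
        = z k'' * ∏ l ∈ (Finset.univ.erase p0).erase p1,
            z (update (update iv p0 k') p1 k'' l) := by
      have hpm : p1 ∈ Finset.univ.erase p0 :=
        Finset.mem_erase.mpr ⟨(Ne.symm hp01), Finset.mem_univ p1⟩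
      have := (Finset.mul_prod_erase (Finset.univ.erase p0)
        (fun l => z (update (update iv p0 k') p1 k'' l)) hpm).symm
      rw [this, update_self]
    have e2 : (∏ l ∈ (Finset.univ.erase p0).erase p1,
          z (update (update iv p0 k') p1 k'' l))
        = ∏ l ∈ (Finset.univ.erase p0).erase p1, z (iv l) := by
      refine Finset.prod_congr rfl fun l hl => ?_
      have h1' := (Finset.mem_erase.mp hl).1
      have h0' := (Finset.mem_erase.mp (Finset.mem_erase.mp hl).2).1
      rw [update_of_ne h1', update_of_ne h0']
    rw [e0, e1, e2]
  have hterm2 : ∀ pr ∈ Kf ×ˢ Kf,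
      Aval y (update (update iv p0 pr.1) p1 pr.2)
        ≤ Aval x (update (update iv p0 pr.1) p1 pr.2) := by
    intro pr hpr
    obtain ⟨hm1, hm2⟩ := Finset.mem_product.mp hpr
    refine HA _ fun k => ?_
    by_cases hk1 : k = p1
    · rw [hk1, update_self]
      exact (Finset.mem_filter.mp hm2).2
    · rw [update_of_ne hk1]
      by_cases hk0 : k = p0
      · rw [hk0, update_self]
        exact (Finset.mem_filter.mp hm1).2
      · rw [update_of_ne hk0]; exact hxK k
  have hsum2 := Finset.sum_le_sum hterm2
  have cx : (∑ pr ∈ Kf ×ˢ Kf, Aval x (update (update iv p0 pr.1) p1 pr.2)) = 0 := by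
    rw [Finset.sum_congr rfl (fun pr _ => hupd x pr.1 pr.2), Finset.sum_product]
    simp_rw [← Finset.mul_sum, ← Finset.sum_mul]
    rw [hSxK]
    ring
  have cy : (∑ pr ∈ Kf ×ˢ Kf, Aval y (update (update iv p0 pr.1) p1 pr.2))
      = (∑ j ∈ Kf, y j) * ((∑ j ∈ Kf, y j) * ∏ l ∈ (Finset.univ.erase p0).erase p1, y (iv l)) := by
    rw [Finset.sum_congr rfl (fun pr _ => hupd y pr.1 pr.2), Finset.sum_product]
    simp_rw [← Finset.mul_sum, ← Finset.sum_mul]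
  have hRy : 0 < ∏ l ∈ (Finset.univ.erase p0).erase p1, y (iv l) :=
    Finset.prod_pos fun l _ => hypos _ (hxK l)
  rw [cx, cy] at hsum2
  nlinarith [mul_self_pos.mpr hSyK, hRy]

end Core

end Stmt16

namespace Stmt16an
open Stmt16



variable {n d : ℕ}

local notation "E" => EuclideanSpace ℝ (Fin n)

section Analysis
variable (x y v : EuclideanSpace ℝ (Fin n))

/-- the monomial function -/
def P (i : Fin d → Fin n) : EuclideanSpace ℝ (Fin n) → ℝ := fun z => ∏ k, z (i k)

def Dval (i : Fin d → Fin n) : ℝ := ∑ k, (∏ l ∈ Finset.univ.erase k, x (i l)) * v (i k)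

/-- derivative of the monomial as a continuous linear map -/
noncomputable def Dclm (i : Fin d → Fin n) : EuclideanSpace ℝ (Fin n) →L[ℝ] ℝ :=
  ∑ k : Fin d, (∏ l ∈ Finset.univ.erase k, x (i l)) • EuclideanSpace.proj (𝕜 := ℝ) (i k)

lemma Dclm_apply (i : Fin d → Fin n) : Dclm x i v = Dval x v i := by
  rw [Dclm, Dval, ContinuousLinearMap.sum_apply]
  refine Finset.sum_congr rfl fun k _ => ?_
  rw [ContinuousLinearMap.smul_apply, smul_eq_mul]
  rfl

lemma P_hasStrict (i : Fin d → Fin n) : HasStrictFDerivAt (P i) (Dclm x i) x := by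
  have h := HasStrictFDerivAt.finset_prod (u := (Finset.univ : Finset (Fin d)))
    (g := fun k (z : EuclideanSpace ℝ (Fin n)) => z (i k))
    (g' := fun k => EuclideanSpace.proj (𝕜 := ℝ) (i k)) (x := x)
    (fun k _ => (EuclideanSpace.proj (𝕜 := ℝ) (i k)).hasStrictFDerivAt)
  exact h

lemma P_continuous (i : Fin d → Fin n) : Continuous (P i) := by
  refine continuous_finset_prod _ fun k _ => ?_
  exact (EuclideanSpace.proj (𝕜 := ℝ) (i k)).continuous

end Analysis

section Tendsto
variable (x v : EuclideanSpace ℝ (Fin n))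

/-- base point tendsto -/
lemma tendsto_base :
    Tendsto (fun p : EuclideanSpace ℝ (Fin n) × ℝ => p.1 + p.2 • v)
      ((nhds x) ×ˢ (nhdsWithin 0 (Set.Ioi 0))) (nhds x) := by
  have h1 : Tendsto (fun p : EuclideanSpace ℝ (Fin n) × ℝ => p.1)
      ((nhds x) ×ˢ (nhdsWithin 0 (Set.Ioi 0))) (nhds x) := tendsto_fst
  have h2 : Tendsto (fun p : EuclideanSpace ℝ (Fin n) × ℝ => p.2)
      ((nhds x) ×ˢ (nhdsWithin 0 (Set.Ioi 0))) (nhds (0 : ℝ)) :=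
    tendsto_snd.mono_right nhdsWithin_le_nhds
  have h3 := h1.add (h2.smul_const v)
  simpa using h3

lemma eventually_pos :
    ∀ᶠ p : EuclideanSpace ℝ (Fin n) × ℝ in (nhds x) ×ˢ (nhdsWithin 0 (Set.Ioi 0)),
      0 < p.2 := by
  have : ∀ᶠ lam in nhdsWithin (0 : ℝ) (Set.Ioi 0), lam ∈ Set.Ioi (0 : ℝ) :=
    eventually_mem_nhdsWithin
  exact this.prod_inr (nhds x)

lemma tendsto_quot (i : Fin d → Fin n) :
    Tendsto (fun p : EuclideanSpace ℝ (Fin n) × ℝ => (P i (p.1 + p.2 • v) - P i p.1) / p.2)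
      ((nhds x) ×ˢ (nhdsWithin 0 (Set.Ioi 0))) (nhds (Dval x v i)) := by
  set F := (nhds x) ×ˢ (nhdsWithin (0:ℝ) (Set.Ioi 0)) with hF
  have hst := P_hasStrict x i
  have hlo := hst.isLittleO
  have hΦ : Tendsto (fun p : EuclideanSpace ℝ (Fin n) × ℝ => (p.1 + p.2 • v, p.1)) F
      (nhds (x, x)) := (tendsto_base x v).prodMk_nhds tendsto_fst
  have hcomp := hlo.comp_tendsto hΦ
  rw [Metric.tendsto_nhds]
  intro ε hε
  have hc : 0 < ε / (2 * (‖v‖ + 1)) := by positivity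
  filter_upwards [hcomp.def hc, eventually_pos x] with p hb hp
  have hpne : p.2 ≠ 0 := ne_of_gt hp
  rw [Real.dist_eq]
  have hDsub : Dclm x i ((p.1 + p.2 • v) - p.1) = p.2 * Dval x v i := by
    rw [add_sub_cancel_left, map_smul, smul_eq_mul, Dclm_apply]
  have heq : (P i (p.1 + p.2 • v) - P i p.1) / p.2 - Dval x v i
      = (P i (p.1 + p.2 • v) - P i p.1 - Dclm x i ((p.1 + p.2 • v) - p.1)) / p.2 := by
    rw [hDsub]
    field_simp
  rw [heq, abs_div, abs_of_pos hp]
  have hnorm : ‖(p.1 + p.2 • v) - p.1‖ = p.2 * ‖v‖ := by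
    rw [add_sub_cancel_left, norm_smul, Real.norm_eq_abs, abs_of_pos hp]
  simp only [Function.comp] at hb
  rw [Real.norm_eq_abs] at hb
  have hb2 : |P i (p.1 + p.2 • v) - P i p.1 - Dclm x i ((p.1 + p.2 • v) - p.1)|
      ≤ ε / (2 * (‖v‖ + 1)) * (p.2 * ‖v‖) := by
    calc |P i (p.1 + p.2 • v) - P i p.1 - Dclm x i ((p.1 + p.2 • v) - p.1)|
        ≤ ε / (2 * (‖v‖ + 1)) * ‖(p.1 + p.2 • v) - p.1‖ := hb
    _ = ε / (2 * (‖v‖ + 1)) * (p.2 * ‖v‖) := by rw [hnorm]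
  rw [div_lt_iff₀ hp]
  have hvpos : (0:ℝ) ≤ ‖v‖ := norm_nonneg v
  have key : ε / (2 * (‖v‖ + 1)) * ‖v‖ < ε := by
    rw [div_mul_eq_mul_div, div_lt_iff₀ (by positivity)]
    nlinarith
  have hv1 : ε / (2 * (‖v‖ + 1)) * (p.2 * ‖v‖) < ε * p.2 := by
    have := mul_lt_mul_of_pos_right key hp
    calc ε / (2 * (‖v‖ + 1)) * (p.2 * ‖v‖) = ε / (2 * (‖v‖ + 1)) * ‖v‖ * p.2 := by ring
    _ < ε * p.2 := this
  calc |P i (p.1 + p.2 • v) - P i p.1 - (Dclm x i) (p.1 + p.2 • v - p.1)|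
      ≤ ε / (2 * (‖v‖ + 1)) * (p.2 * ‖v‖) := hb2
  _ < ε * p.2 := hv1
end Tendsto

section Ustat
variable (x y : EuclideanSpace ℝ (Fin n))

/-- the sign used in the upper estimate -/
noncomputable def sfun (v : EuclideanSpace ℝ (Fin n)) (i : Fin d → Fin n) : ℝ :=
  if (∏ k, x (i k)) = (∏ k, y (i k)) then |Dval x v i|
  else (if (∏ k, y (i k)) < (∏ k, x (i k)) then 1 else -1) * Dval x v i

lemma Ustat
    (hstat : (0 : EuclideanSpace ℝ (Fin n)) ∈
      clarkeSubdiff (fun z : EuclideanSpace ℝ (Fin n) =>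
        ∑ i : Fin d → Fin n, |(∏ k : Fin d, z (i k)) - ∏ k : Fin d, y (i k)|) x)
    (v : EuclideanSpace ℝ (Fin n)) :
    0 ≤ ∑ i : Fin d → Fin n, sfun x y v i := by
  classical
  set F := (nhds x) ×ˢ (nhdsWithin (0:ℝ) (Set.Ioi 0)) with hFdef
  set q : EuclideanSpace ℝ (Fin n) × ℝ → ℝ := fun p =>
    ((∑ i : Fin d → Fin n, |(∏ k : Fin d, (p.1 + p.2 • v) (i k)) - ∏ k : Fin d, y (i k)|)
      - ∑ i : Fin d → Fin n, |(∏ k : Fin d, p.1 (i k)) - ∏ k : Fin d, y (i k)|) / p.2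
    with hq
  have h0 : 0 ≤ Filter.limsup q F := by
    have h : (inner ℝ v (0 : EuclideanSpace ℝ (Fin n)) : ℝ) ≤ Filter.limsup q F := hstat v
    rwa [inner_zero_right] at h
  set qi : (Fin d → Fin n) → EuclideanSpace ℝ (Fin n) × ℝ → ℝ := fun i p =>
    (|P i (p.1 + p.2 • v) - ∏ k : Fin d, y (i k)| - |P i p.1 - ∏ k : Fin d, y (i k)|) / p.2
    with hqi
  have hsplit : ∀ p, q p = ∑ i : Fin d → Fin n, qi i p := by
    intro p
    rw [hq, hqi]
    simp only [P]
    rw [← Finset.sum_sub_distrib, Finset.sum_div]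
  -- it suffices to show `0 ≤ U + ε` for every positive `ε`
  by_contra hcon
  push_neg at hcon
  set U := ∑ i : Fin d → Fin n, sfun x y v i with hU
  set N := (Fintype.card (Fin d → Fin n) : ℝ) with hN
  have hNpos : (0:ℝ) ≤ N := by positivity
  set ε' := (-U) / (2 * (N + 1)) with hε'
  have hε'pos : 0 < ε' := by
    rw [hε']
    have : (0:ℝ) < -U := by linarith
    positivity
  -- eventual upper bound for each term
  have hub : ∀ i : Fin d → Fin n, ∀ᶠ p in F, qi i p ≤ sfun x y v i + ε' := by
    intro i
    rcases eq_or_ne (∏ k, x (i k)) (∏ k, y (i k)) with htie | hne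
    · -- tie case
      have ht := ((tendsto_quot x v i).abs.eventually_le_const
        (lt_add_of_pos_right |Dval x v i| hε'pos))
      filter_upwards [ht, eventually_pos x] with p h1 h2
      have hstep : qi i p ≤ |(P i (p.1 + p.2 • v) - P i p.1) / p.2| := by
        simp only [hqi]
        rw [abs_div, abs_of_pos h2]
        refine (div_le_div_iff_of_pos_right h2).mpr ?_
        have h5 := abs_sub_abs_le_abs_sub (P i (p.1 + p.2 • v) - ∏ k : Fin d, y (i k))
          (P i p.1 - ∏ k : Fin d, y (i k))
        rw [sub_sub_sub_cancel_right] at h5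
        exact h5
      calc qi i p ≤ |(P i (p.1 + p.2 • v) - P i p.1) / p.2| := hstep
      _ ≤ |Dval x v i| + ε' := h1
      _ = sfun x y v i + ε' := by rw [sfun, if_pos htie]
    · rcases lt_or_gt_of_ne hne with hlt | hgt
      · -- x-product < y-product
        have e1 : ∀ᶠ p in F, P i p.1 < ∏ k, y (i k) := by
          have hten : Tendsto (fun p : EuclideanSpace ℝ (Fin n) × ℝ => P i p.1) F
              (nhds (P i x)) := ((P_continuous i).tendsto x).comp tendsto_fst
          exact hten.eventually_lt_const hlt
        have e2 : ∀ᶠ p in F, P i (p.1 + p.2 • v) < ∏ k, y (i k) := by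
          have hten : Tendsto (fun p : EuclideanSpace ℝ (Fin n) × ℝ =>
              P i (p.1 + p.2 • v)) F (nhds (P i x)) :=
            ((P_continuous i).tendsto x).comp (tendsto_base x v)
          exact hten.eventually_lt_const hlt
        have e3 := (tendsto_quot x v i).neg.eventually_le_const
          (lt_add_of_pos_right (-(Dval x v i)) hε'pos)
        filter_upwards [e1, e2, e3, eventually_pos x] with p h1 h2 h3 h4
        have : qi i p = -((P i (p.1 + p.2 • v) - P i p.1) / p.2) := by
          simp only [hqi]
          rw [abs_of_neg (sub_neg.mpr h2), abs_of_neg (sub_neg.mpr h1)]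
          ring
        rw [this, sfun, if_neg hne, if_neg (not_lt.mpr (le_of_lt hlt))]
        linarith
      · -- y-product < x-product
        have e1 : ∀ᶠ p in F, (∏ k, y (i k)) < P i p.1 := by
          have hten : Tendsto (fun p : EuclideanSpace ℝ (Fin n) × ℝ => P i p.1) F
              (nhds (P i x)) := ((P_continuous i).tendsto x).comp tendsto_fst
          exact hten.eventually_const_lt hgt
        have e2 : ∀ᶠ p in F, (∏ k, y (i k)) < P i (p.1 + p.2 • v) := by
          have hten : Tendsto (fun p : EuclideanSpace ℝ (Fin n) × ℝ =>
              P i (p.1 + p.2 • v)) F (nhds (P i x)) :=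
            ((P_continuous i).tendsto x).comp (tendsto_base x v)
          exact hten.eventually_const_lt hgt
        have e3 := (tendsto_quot x v i).eventually_le_const
          (lt_add_of_pos_right (Dval x v i) hε'pos)
        filter_upwards [e1, e2, e3, eventually_pos x] with p h1 h2 h3 h4
        have : qi i p = (P i (p.1 + p.2 • v) - P i p.1) / p.2 := by
          simp only [hqi]
          rw [abs_of_pos (sub_pos.mpr h2), abs_of_pos (sub_pos.mpr h1)]
          ring
        rw [this, sfun, if_neg hne, if_pos hgt]
        linarith
  -- eventual lower bound for each term (for coboundedness)
  have hlb : ∀ i : Fin d → Fin n, ∀ᶠ p in F, -(|Dval x v i| + 1) ≤ qi i p := by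
    intro i
    have ht := ((tendsto_quot x v i).abs.eventually_le_const
      (lt_add_of_pos_right |Dval x v i| one_pos))
    filter_upwards [ht, eventually_pos x] with p h1 h2
    have hstep : -|(P i (p.1 + p.2 • v) - P i p.1) / p.2| ≤ qi i p := by
      simp only [hqi]
      rw [abs_div, abs_of_pos h2, ← neg_div]
      refine (div_le_div_iff_of_pos_right h2).mpr ?_
      have h5 := abs_sub_abs_le_abs_sub (P i p.1 - ∏ k : Fin d, y (i k))
        (P i (p.1 + p.2 • v) - ∏ k : Fin d, y (i k))
      rw [sub_sub_sub_cancel_right,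
        abs_sub_comm (P i p.1) (P i (p.1 + p.2 • v))] at h5
      linarith
    linarith [h1, hstep]
  have hallub : ∀ᶠ p in F, ∀ i : Fin d → Fin n, qi i p ≤ sfun x y v i + ε' :=
    eventually_all.mpr hub
  have halllb : ∀ᶠ p in F, ∀ i : Fin d → Fin n, -(|Dval x v i| + 1) ≤ qi i p :=
    eventually_all.mpr hlb
  have hqub : ∀ᶠ p in F, q p ≤ U + N * ε' := by
    filter_upwards [hallub] with p hp
    rw [hsplit p]
    calc ∑ i : Fin d → Fin n, qi i p ≤ ∑ i : Fin d → Fin n, (sfun x y v i + ε') :=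
          Finset.sum_le_sum fun i _ => hp i
    _ = U + N * ε' := by
        rw [Finset.sum_add_distrib, Finset.sum_const, Finset.card_univ, nsmul_eq_mul, hU, hN]
  have hqlb : ∀ᶠ p in F, (∑ i : Fin d → Fin n, -(|Dval x v i| + 1)) ≤ q p := by
    filter_upwards [halllb] with p hp
    rw [hsplit p]
    exact Finset.sum_le_sum fun i _ => hp i
  have hcb : Filter.IsCoboundedUnder (· ≤ ·) F q :=
    Filter.isCoboundedUnder_le_of_eventually_le F hqlb
  have hfin : Filter.limsup q F ≤ U + N * ε' := Filter.limsup_le_of_le hcb hqub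
  have : 0 ≤ U + N * ε' := le_trans h0 hfin
  rw [hε'] at this
  have hUneg : (0:ℝ) < -U := by linarith
  have hfr : N / (2 * (N + 1)) ≤ 1 / 2 := by
    rw [div_le_div_iff₀ (by positivity) (by norm_num : (0:ℝ) < 2)]
    linarith
  have heq2 : N * (-U / (2 * (N + 1))) = (-U) * (N / (2 * (N + 1))) := by ring
  have hle2 : (-U) * (N / (2 * (N + 1))) ≤ (-U) * (1 / 2) :=
    mul_le_mul_of_nonneg_left hfr (le_of_lt hUneg)
  rw [heq2] at this
  linarith
end Ustat


section Sep
variable (x y : EuclideanSpace ℝ (Fin n))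

noncomputable def gradv (i : Fin d → Fin n) : EuclideanSpace ℝ (Fin n) :=
  ∑ k : Fin d, (∏ l ∈ Finset.univ.erase k, x (i l)) • EuclideanSpace.single (i k) (1 : ℝ)

lemma gradv_inner (i : Fin d → Fin n) (v : EuclideanSpace ℝ (Fin n)) :
    (inner ℝ (gradv x i) v : ℝ) = Dval x v i := by
  rw [gradv, Dval, sum_inner]
  refine Finset.sum_congr rfl fun k _ => ?_
  rw [real_inner_smul_left, EuclideanSpace.inner_single_left]
  simp

lemma gradv_coord (i : Fin d → Fin n) (j : Fin n) :
    EuclideanSpace.proj (𝕜 := ℝ) j (gradv x i)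
      = ∑ k : Fin d, (if i k = j then ∏ l ∈ Finset.univ.erase k, x (i l) else 0) := by
  rw [gradv, map_sum]
  refine Finset.sum_congr rfl fun k _ => ?_
  rw [map_smul, smul_eq_mul]
  have : EuclideanSpace.proj (𝕜 := ℝ) j (EuclideanSpace.single (i k) (1 : ℝ))
      = if j = i k then (1 : ℝ) else 0 := EuclideanSpace.single_apply (i k) 1 j
  rw [this, mul_ite, mul_one, mul_zero]
  exact if_congr eq_comm rfl rfl

lemma exists_dual
    (hU : ∀ v : EuclideanSpace ℝ (Fin n), 0 ≤ ∑ i : Fin d → Fin n, sfun x y v i) :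
    ∃ t : (Fin d → Fin n) → ℝ, (∀ i, |t i| ≤ 1) ∧
      (∀ i, (∏ k, x (i k)) ≠ (∏ k, y (i k)) →
        t i = if (∏ k, y (i k)) < (∏ k, x (i k)) then 1 else -1) ∧
      (∀ j, ∑ i : Fin d → Fin n,
          t i * (∑ k : Fin d, if i k = j then ∏ l ∈ Finset.univ.erase k, x (i l) else 0) = 0) := by
  classical
  set sg : (Fin d → Fin n) → ℝ :=
    fun i => if (∏ k, y (i k)) < (∏ k, x (i k)) then 1 else -1 with hsg
  set lo : (Fin d → Fin n) → ℝ :=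
    fun i => if (∏ k, x (i k)) = (∏ k, y (i k)) then -1 else sg i with hlo
  set hi : (Fin d → Fin n) → ℝ :=
    fun i => if (∏ k, x (i k)) = (∏ k, y (i k)) then 1 else sg i with hhi
  set S : Set ((Fin d → Fin n) → ℝ) := Set.univ.pi (fun i => Set.Icc (lo i) (hi i)) with hS
  set Φ : ((Fin d → Fin n) → ℝ) → EuclideanSpace ℝ (Fin n) :=
    fun t => ∑ i : Fin d → Fin n, t i • gradv x i with hΦ
  have hlin : IsLinearMap ℝ Φ := by
    constructor
    · intro a b
      rw [hΦ]
      simp only [Pi.add_apply, add_smul]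
      rw [Finset.sum_add_distrib]
    · intro c a
      rw [hΦ]
      simp only [Pi.smul_apply, smul_eq_mul, mul_smul]
      rw [← Finset.smul_sum]
  have hcont : Continuous Φ := by
    refine continuous_finset_sum _ fun i _ => ?_
    exact (continuous_apply i).smul continuous_const
  have hconv : Convex ℝ (Φ '' S) :=
    (convex_pi fun i _ => convex_Icc (lo i) (hi i)).is_linear_image hlin
  have hcpt : IsCompact (Φ '' S) :=
    ((isCompact_univ_pi fun i => isCompact_Icc).image hcont)
  have h0mem : (0 : EuclideanSpace ℝ (Fin n)) ∈ Φ '' S := by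
    by_contra h0
    obtain ⟨f, u, hfu, hu0⟩ := geometric_hahn_banach_closed_point hconv hcpt.isClosed h0
    rw [map_zero] at hu0
    set w := (InnerProductSpace.toDual ℝ (EuclideanSpace ℝ (Fin n))).symm f with hw
    have hwz : ∀ z, f z = (inner ℝ w z : ℝ) := fun z =>
      (InnerProductSpace.toDual_symm_apply).symm
    set tt : (Fin d → Fin n) → ℝ := fun i =>
      if (∏ k, x (i k)) = (∏ k, y (i k)) then (if 0 ≤ Dval x w i then 1 else -1)
      else sg i with htt
    have httS : tt ∈ S := by
      intro i _
      simp only [Set.mem_Icc, htt, hlo, hhi]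
      by_cases h : (∏ k, x (i k)) = (∏ k, y (i k))
      · rw [if_pos h, if_pos h, if_pos h]
        by_cases h2 : 0 ≤ Dval x w i
        · rw [if_pos h2]; constructor <;> norm_num
        · rw [if_neg h2]; constructor <;> norm_num
      · rw [if_neg h, if_neg h, if_neg h]
        exact ⟨le_refl _, le_refl _⟩
    have hval : f (Φ tt) = ∑ i : Fin d → Fin n, tt i * Dval x w i := by
      rw [hΦ, map_sum]
      refine Finset.sum_congr rfl fun i _ => ?_
      rw [map_smul, smul_eq_mul, hwz (gradv x i), real_inner_comm, gradv_inner]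
    have hge : 0 ≤ f (Φ tt) := by
      rw [hval]
      have : ∀ i : Fin d → Fin n, tt i * Dval x w i = sfun x y w i := by
        intro i
        simp only [htt, sfun]
        by_cases h : (∏ k, x (i k)) = (∏ k, y (i k))
        · rw [if_pos h, if_pos h]
          by_cases h2 : 0 ≤ Dval x w i
          · rw [if_pos h2, one_mul, abs_of_nonneg h2]
          · rw [if_neg h2, neg_one_mul, abs_of_neg (not_le.mp h2)]
        · simp only [if_neg h, hsg]
      rw [Finset.sum_congr rfl fun i _ => this i]
      exact hU w
    have hlt := hfu (Φ tt) ⟨tt, httS, rfl⟩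
    linarith
  obtain ⟨t0, ht0S, ht0⟩ := h0mem
  refine ⟨t0, ?_, ?_, ?_⟩
  · intro i
    have := ht0S i (Set.mem_univ i)
    simp only [Set.mem_Icc, hlo, hhi] at this
    by_cases h : (∏ k, x (i k)) = (∏ k, y (i k))
    · simp only [if_pos h] at this
      exact abs_le.mpr this
    · simp only [if_neg h, hsg] at this
      by_cases h2 : (∏ k, y (i k)) < (∏ k, x (i k))
      · rw [if_pos h2] at this
        rw [abs_le]
        constructor <;> linarith [this.1, this.2]
      · rw [if_neg h2] at this
        rw [abs_le]
        constructor <;> linarith [this.1, this.2]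
  · intro i hne
    have := ht0S i (Set.mem_univ i)
    simp only [Set.mem_Icc, hlo, hhi, if_neg hne, hsg] at this
    exact le_antisymm this.2 this.1
  · intro j
    have hz : EuclideanSpace.proj (𝕜 := ℝ) j (Φ t0) = 0 := by rw [ht0, map_zero]
    rw [hΦ] at hz
    rw [map_sum] at hz
    calc ∑ i : Fin d → Fin n,
        t0 i * (∑ k : Fin d, if i k = j then ∏ l ∈ Finset.univ.erase k, x (i l) else 0)
        = ∑ i : Fin d → Fin n, EuclideanSpace.proj (𝕜 := ℝ) j (t0 i • gradv x i) := by
          refine Finset.sum_congr rfl fun i _ => ?_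
          rw [map_smul, smul_eq_mul, gradv_coord]
    _ = 0 := hz
end Sep


section Main
open Finset Function

lemma final {n d : ℕ} (hd : 1 ≤ d) (y x : EuclideanSpace ℝ (Fin n))
    (hstat : (0 : EuclideanSpace ℝ (Fin n)) ∈
      clarkeSubdiff (fun z : EuclideanSpace ℝ (Fin n) =>
        ∑ i : Fin d → Fin n, |(∏ k : Fin d, z (i k)) - ∏ k : Fin d, y (i k)|) x) :
    (∀ i : Fin n, y i = 0 → x i = 0) ∧
      ∀ i : Fin d → Fin n, (∏ k : Fin d, y (i k)) ≠ 0 →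
        (∏ k : Fin d, x (i k)) / (∏ k : Fin d, y (i k)) ≤ 1 := by
  classical
  obtain ⟨t, ht1, ht2, hrow⟩ := exists_dual x y (Ustat x y hstat)
  -- reinterpret the data over plain functions
  set X : Fin n → ℝ := fun j => x j with hX
  set Y : Fin n → ℝ := fun j => y j with hY
  have ht2' : ∀ i : Fin d → Fin n, Aval X i ≠ Aval Y i →
      t i = if Aval Y i < Aval X i then 1 else -1 := ht2
  have hrow' : ∀ j, ∑ i : Fin d → Fin n, t i * gco X i j = 0 := hrow
  -- Part 1
  have part1 : ∀ j : Fin n, y j = 0 → x j = 0 := by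
    intro j hyj
    by_contra hxj
    have hyj' : Y j = 0 := hyj
    have hxj' : X j ≠ 0 := hxj
    have hzero : ∑ i : Fin d → Fin n, ∑ k : Fin d,
        (if i k = j then t i * Aval X i else 0) = 0 := by
      have e : ∀ i : Fin d → Fin n,
          (∑ k : Fin d, if i k = j then t i * Aval X i else 0)
            = X j * (t i * gco X i j) := by
        intro i
        rw [gco, Finset.mul_sum, Finset.mul_sum]
        refine Finset.sum_congr rfl fun k _ => ?_
        by_cases h : i k = j
        · simp only [if_pos h]
          rw [Aval_eq_mul_Xval X i k, h]
          ring
        · simp only [if_neg h, mul_zero]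
      rw [Finset.sum_congr rfl fun i _ => e i, ← Finset.mul_sum, hrow' j, mul_zero]
    have hpos : 0 < ∑ i : Fin d → Fin n, ∑ k : Fin d,
        (if i k = j then t i * Aval X i else 0) := by
      have hnn : ∀ i : Fin d → Fin n, ∀ k : Fin d,
          0 ≤ (if i k = j then t i * Aval X i else 0) := by
        intro i k
        by_cases h : i k = j
        · rw [if_pos h]
          rcases eq_or_ne (Aval X i) 0 with h0 | h0
          · rw [h0, mul_zero]
          · have hc : Aval Y i = 0 :=
              Finset.prod_eq_zero (Finset.mem_univ k) (by rw [h]; exact hyj')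
            have hti := ht2' i (by rw [hc]; exact h0)
            rw [hc] at hti
            rcases lt_or_gt_of_ne h0 with hneg | hposx
            · rw [hti, if_neg (not_lt.mpr hneg.le)]
              nlinarith
            · rw [hti, if_pos hposx]
              nlinarith
        · rw [if_neg h]
      refine Finset.sum_pos' (fun i _ => Finset.sum_nonneg fun k _ => hnn i k)
        ⟨(fun _ : Fin d => j), Finset.mem_univ _, ?_⟩
      have hA : Aval X (fun _ : Fin d => j) = X j ^ d := by
        rw [Aval, Finset.prod_const, Finset.card_univ, Fintype.card_fin]
      have hAne : Aval X (fun _ : Fin d => j) ≠ 0 := by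
        rw [hA]; exact pow_ne_zero d hxj'
      have hterm : ∀ k : Fin d, (0:ℝ) <
          (if (fun _ : Fin d => j) k = j then t (fun _ : Fin d => j) * Aval X (fun _ : Fin d => j) else 0) := by
        intro k
        rw [if_pos rfl]
        have hc : Aval Y (fun _ : Fin d => j) = 0 :=
          Finset.prod_eq_zero (Finset.mem_univ k) hyj'
        have hti := ht2' (fun _ : Fin d => j) (by rw [hc]; exact hAne)
        rw [hc] at hti
        rcases lt_or_gt_of_ne hAne with hneg | hposx
        · rw [hti, if_neg (not_lt.mpr hneg.le)]
          nlinarith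
        · rw [hti, if_pos hposx]
          nlinarith
      refine Finset.sum_pos (fun k _ => hterm k) ?_
      exact ⟨⟨0, hd⟩, Finset.mem_univ _⟩
    rw [hzero] at hpos
    exact lt_irrefl _ hpos
  refine ⟨part1, ?_⟩
  -- Part 2 : transform so that y becomes nonnegative, then apply `core`
  set η : Fin n → ℝ := fun j => if Y j < 0 then -1 else 1 with hη
  have hη1 : ∀ j, η j * η j = 1 := by
    intro j; simp only [hη]; by_cases h : Y j < 0 <;> simp [h]
  have hηne : ∀ j, η j ≠ 0 := by
    intro j h0
    have := hη1 j
    rw [h0, mul_zero] at this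
    norm_num at this
  set x' : Fin n → ℝ := fun j => η j * X j with hx'
  set y' : Fin n → ℝ := fun j => η j * Y j with hy'
  set ε : (Fin d → Fin n) → ℝ := fun i => ∏ k, η (i k) with hε
  have hεsq : ∀ i, ε i * ε i = 1 := by
    intro i
    simp only [hε]
    rw [← Finset.prod_mul_distrib, Finset.prod_congr rfl fun k _ => hη1 (i k),
      Finset.prod_const_one]
  have hε1 : ∀ i, ε i = 1 ∨ ε i = -1 := fun i => mul_self_eq_one_iff.mp (hεsq i)
  have hεne : ∀ i, ε i ≠ 0 := by
    intro i
    rcases hε1 i with h | h <;> rw [h] <;> norm_num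
  set t' : (Fin d → Fin n) → ℝ := fun i => ε i * t i with ht'
  have hax' : ∀ i, Aval x' i = ε i * Aval X i := by
    intro i
    simp only [hx', hε, Aval]
    rw [Finset.prod_mul_distrib]
  have hay' : ∀ i, Aval y' i = ε i * Aval Y i := by
    intro i
    simp only [hy', hε, Aval]
    rw [Finset.prod_mul_distrib]
  have hy'nonneg : ∀ j, 0 ≤ y' j := by
    intro j
    simp only [hy', hη]
    by_cases h : Y j < 0
    · rw [if_pos h]; nlinarith
    · rw [if_neg h]; push_neg at h; simpa using h
  have hy'zero : ∀ j, y' j = 0 → x' j = 0 := by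
    intro j h0
    simp only [hy'] at h0
    have hyj : Y j = 0 := by
      rcases mul_eq_zero.mp h0 with h | h
      · exact absurd h (hηne j)
      · exact h
    simp only [hx']
    have hxz : X j = 0 := part1 j hyj
    rw [hxz, mul_zero]
  have ht1' : ∀ i, |t' i| ≤ 1 := by
    intro i
    simp only [ht']
    rw [abs_mul]
    have : |ε i| = 1 := by
      rcases hε1 i with h | h <;> rw [h] <;> norm_num
    rw [this, one_mul]
    exact ht1 i
  have ht2'' : ∀ i : Fin d → Fin n, Aval x' i ≠ Aval y' i →
      t' i = if Aval y' i < Aval x' i then 1 else -1 := by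
    intro i hne
    rw [hax', hay'] at hne ⊢
    simp only [ht']
    rcases hε1 i with h | h
    · simp only [h, one_mul] at hne ⊢
      exact ht2' i hne
    · rw [h] at hne ⊢
      have hne2 : Aval X i ≠ Aval Y i := by
        intro hcon; apply hne; rw [hcon]
      have hti := ht2' i hne2
      rcases lt_or_gt_of_ne hne2 with hlt | hgt
      · rw [if_neg (not_lt.mpr hlt.le)] at hti
        rw [hti, if_pos (by nlinarith : (-1:ℝ) * Aval Y i < -1 * Aval X i)]
        norm_num
      · rw [if_pos hgt] at hti
        rw [hti, if_neg (by nlinarith : ¬ ((-1:ℝ) * Aval Y i < -1 * Aval X i))]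
        norm_num
  have hXval' : ∀ (i : Fin d → Fin n) (k : Fin d),
      Xval x' i k = (η (i k) * ε i) * Xval X i k := by
    intro i k
    have h1 : Xval x' i k = (∏ l ∈ Finset.univ.erase k, η (i l)) * Xval X i k := by
      simp only [hx', Xval]
      rw [Finset.prod_mul_distrib]
    have h3 : ε i = η (i k) * ∏ l ∈ Finset.univ.erase k, η (i l) := by
      simp only [hε]
      exact (Finset.mul_prod_erase Finset.univ (fun l => η (i l))
        (Finset.mem_univ k)).symm
    have h2 : (∏ l ∈ Finset.univ.erase k, η (i l)) = η (i k) * ε i := by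
      have h4 := congrArg (fun z => η (i k) * z) h3
      rw [← mul_assoc, hη1 (i k), one_mul] at h4
      exact h4.symm
    rw [h1, h2]
  have hrow'' : ∀ j, ∑ i : Fin d → Fin n, t' i * gco x' i j = 0 := by
    intro j
    have e : ∀ i : Fin d → Fin n, t' i * gco x' i j = η j * (t i * gco X i j) := by
      intro i
      rw [gco, gco, Finset.mul_sum, Finset.mul_sum, Finset.mul_sum]
      refine Finset.sum_congr rfl fun k _ => ?_
      by_cases h : i k = j
      · simp only [if_pos h]
        rw [hXval' i k, h]
        simp only [ht']
        rw [show (ε i * t i) * ((η j * ε i) * Xval X i k)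
            = (ε i * ε i) * (η j * (t i * Xval X i k)) from by ring, hεsq i, one_mul]
      · simp only [if_neg h, mul_zero]
    rw [Finset.sum_congr rfl fun i _ => e i, ← Finset.mul_sum, hrow' j, mul_zero]
  intro i hci
  by_contra hgt
  push_neg at hgt
  have hci' : Aval Y i ≠ 0 := hci
  have hgt2 : 1 < Aval X i / Aval Y i := hgt
  have hc'ne : Aval y' i ≠ 0 := by
    rw [hay']
    exact mul_ne_zero (hεne i) hci'
  have hratio : Aval x' i / Aval y' i = Aval X i / Aval Y i := by
    rw [hax', hay', mul_div_mul_left _ _ (hεne i)]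
  have hgt' : 1 < Aval x' i / Aval y' i := by
    rw [hratio]; exact hgt2
  exact core x' y' t' hd hy'nonneg hy'zero ht1' ht2'' hrow'' i hc'ne hgt'

end Main

end Stmt16an

end AuxOpen

/-- if `x` is a Clarke stationary point of
`f₁(x) = Σ |x_{i₁}⋯x_{i_d} − y_{i₁}⋯y_{i_d}|`, then `yᵢ = 0` forces `xᵢ = 0`, and all
product ratios are at most `1`. -/
theorem stmt_16 {n d : ℕ} (hd : 1 ≤ d) (y x : EuclideanSpace ℝ (Fin n))
    (hstat : (0 : EuclideanSpace ℝ (Fin n)) ∈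
      clarkeSubdiff (fun z : EuclideanSpace ℝ (Fin n) =>
        ∑ i : Fin d → Fin n, |(∏ k : Fin d, z (i k)) - ∏ k : Fin d, y (i k)|) x) :
    (∀ i : Fin n, y i = 0 → x i = 0) ∧
      ∀ i : Fin d → Fin n, (∏ k : Fin d, y (i k)) ≠ 0 →
        (∏ k : Fin d, x (i k)) / (∏ k : Fin d, y (i k)) ≤ 1 := by
  exact Stmt16an.final hd y x hstat
end

section
/- Fix y ∈ ℝⁿ with y₁⋯y_n ≠ 0 and let d ≥ 2. Then any x ∈ ℝⁿ with x ≠ 0 satisfying Σᵢ |yᵢ| · (xᵢ/yᵢ) = 0 and (x_{i₁}⋯x_{i_d})/(y_{i₁}⋯y_{i_d}) ≤ 1 for all d-tuples is a first-order stationary point of f₁(x) = Σ_{i₁,…,i_d} |x_{i₁}⋯x_{i_d} − y_{i₁}⋯y_{i_d}| in the Clarke sense, but is not a local minimum of f₁. -/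
open Filter

private lemma coord_le_norm {n : ℕ} (w : EuclideanSpace ℝ (Fin n)) (j : Fin n) : |w j| ≤ ‖w‖ := by
  have h := abs_real_inner_le_norm (EuclideanSpace.single j (1:ℝ)) w
  simpa [EuclideanSpace.inner_single_left] using h

private lemma sum_prod_pow {n d : ℕ} (a : Fin n → ℝ) :
    ∑ i : Fin d → Fin n, ∏ k : Fin d, a (i k) = (∑ j : Fin n, a j) ^ d := by
  classical
  have h1 : (∑ j : Fin n, a j) ^ d = ∏ _k : Fin d, ∑ j : Fin n, a j := by
    simp [Finset.prod_const]
  rw [h1, Finset.prod_univ_sum (fun _ => Finset.univ) (fun _ j => a j),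
    Fintype.piFinset_univ]

private lemma abs_term_ge {q : ℝ} (r : ℝ) (hq : q ≠ 0) : |q| - |q| / q * r ≤ |r - q| := by
  rcases hq.lt_or_gt with h | h
  · rw [abs_of_neg h]
    have h2 : -q / q = -1 := by field_simp
    rw [h2]
    nlinarith [le_abs_self (r - q)]
  · rw [abs_of_pos h]
    have h2 : q / q = 1 := by field_simp
    rw [h2]
    nlinarith [neg_abs_le (r - q)]

private lemma abs_term_eq {q : ℝ} (r : ℝ) (hq : q ≠ 0) (hr : r / q ≤ 1) :
    |r - q| = |q| - |q| / q * r := by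
  rcases hq.lt_or_gt with h | h
  · have hrq : q ≤ r := by
      nlinarith [div_mul_cancel₀ r hq, mul_le_mul_of_nonpos_right hr h.le]
    rw [abs_of_nonneg (by linarith), abs_of_neg h]
    have h2 : -q / q = -1 := by field_simp
    rw [h2]; ring
  · have hrq : r ≤ q := by
      nlinarith [div_mul_cancel₀ r hq, mul_le_mul_of_nonneg_right hr h.le]
    rw [abs_of_nonpos (by linarith), abs_of_pos h]
    have h2 : q / q = 1 := by field_simp
    rw [h2]; ring

private lemma prod_diff_le {ι : Type*} [DecidableEq ι] (s : Finset ι) (u w : ι → ℝ) (M : ℝ)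
    (hM : 1 ≤ M) (hu : ∀ k ∈ s, |u k| ≤ M) (hw : ∀ k ∈ s, |w k| ≤ M) :
    |(∏ k ∈ s, u k) - ∏ k ∈ s, w k| ≤ M ^ s.card * ∑ k ∈ s, |u k - w k| := by
  induction s using Finset.induction_on with
  | empty => simp
  | insert a s ha ih =>
    have hM0 : (0:ℝ) ≤ M := le_trans zero_le_one hM
    have hMc : (1:ℝ) ≤ M ^ s.card := one_le_pow₀ hM
    have hws : |∏ k ∈ s, w k| ≤ M ^ s.card := by
      rw [Finset.abs_prod]
      calc ∏ k ∈ s, |w k| ≤ ∏ _k ∈ s, M :=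
            Finset.prod_le_prod (fun k _ => abs_nonneg _) (fun k hk => hw k (Finset.mem_insert_of_mem hk))
        _ = M ^ s.card := Finset.prod_const M
    have ih' := ih (fun k hk => hu k (Finset.mem_insert_of_mem hk))
      (fun k hk => hw k (Finset.mem_insert_of_mem hk))
    have hua : |u a| ≤ M := hu a (Finset.mem_insert_self a s)
    rw [Finset.prod_insert ha, Finset.prod_insert ha, Finset.sum_insert ha,
      Finset.card_insert_of_notMem ha, pow_succ]
    have key : u a * (∏ k ∈ s, u k) - w a * (∏ k ∈ s, w k)
        = u a * ((∏ k ∈ s, u k) - ∏ k ∈ s, w k) + (u a - w a) * (∏ k ∈ s, w k) := by ring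
    calc |u a * (∏ k ∈ s, u k) - w a * (∏ k ∈ s, w k)|
        ≤ |u a| * |(∏ k ∈ s, u k) - ∏ k ∈ s, w k| + |u a - w a| * |∏ k ∈ s, w k| := by
          rw [key]
          exact le_trans (abs_add_le _ _) (by rw [abs_mul, abs_mul])
      _ ≤ M ^ s.card * M * (|u a - w a| + ∑ k ∈ s, |u k - w k|) := by
          nlinarith [abs_nonneg (u a), abs_nonneg (u a - w a), abs_nonneg ((∏ k ∈ s, u k) - ∏ k ∈ s, w k),
            Finset.sum_nonneg (fun k (_ : k ∈ s) => abs_nonneg (u k - w k)),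
            mul_le_mul hua ih' (abs_nonneg _) hM0,
            mul_le_mul_of_nonneg_left hws (abs_nonneg (u a - w a)),
            mul_nonneg (mul_nonneg (abs_nonneg (u a - w a)) (pow_nonneg hM0 s.card)) (sub_nonneg.mpr hM)]

private lemma prod_sign {n d : ℕ} (y : Fin n → ℝ) (w : Fin n → ℝ) (i : Fin d → Fin n) :
    ∏ k : Fin d, (|y (i k)| / y (i k)) * w (i k)
      = (|∏ k : Fin d, y (i k)| / ∏ k : Fin d, y (i k)) * ∏ k : Fin d, w (i k) := by
  rw [Finset.prod_mul_distrib, Finset.prod_div_distrib, Finset.abs_prod]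

private lemma f_lb {n d : ℕ} (y : EuclideanSpace ℝ (Fin n)) (hy : ∀ j, y j ≠ 0)
    (w : EuclideanSpace ℝ (Fin n)) :
    (∑ i : Fin d → Fin n, |∏ k : Fin d, y (i k)|) - (∑ j : Fin n, |y j| / y j * w j) ^ d
      ≤ ∑ i : Fin d → Fin n, |(∏ k : Fin d, w (i k)) - ∏ k : Fin d, y (i k)| := by
  classical
  rw [← sum_prod_pow (fun j => |y j| / y j * w j), ← Finset.sum_sub_distrib]
  apply Finset.sum_le_sum
  intro i _
  have hq : (∏ k : Fin d, y (i k)) ≠ 0 := Finset.prod_ne_zero_iff.mpr fun k _ => hy (i k)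
  rw [prod_sign y w i]
  exact abs_term_ge _ hq

private lemma f_eq {n d : ℕ} (y : EuclideanSpace ℝ (Fin n)) (hy : ∀ j, y j ≠ 0)
    (w : EuclideanSpace ℝ (Fin n))
    (hw : ∀ i : Fin d → Fin n, (∏ k : Fin d, w (i k)) / (∏ k : Fin d, y (i k)) ≤ 1) :
    ∑ i : Fin d → Fin n, |(∏ k : Fin d, w (i k)) - ∏ k : Fin d, y (i k)|
      = (∑ i : Fin d → Fin n, |∏ k : Fin d, y (i k)|) - (∑ j : Fin n, |y j| / y j * w j) ^ d := by
  classical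
  rw [← sum_prod_pow (fun j => |y j| / y j * w j), ← Finset.sum_sub_distrib]
  apply Finset.sum_congr rfl
  intro i _
  have hq : (∏ k : Fin d, y (i k)) ≠ 0 := Finset.prod_ne_zero_iff.mpr fun k _ => hy (i k)
  rw [prod_sign y w i]
  exact abs_term_eq _ hq (hw i)

private lemma stationary_aux {n : ℕ} (f : EuclideanSpace ℝ (Fin n) → ℝ)
    (x v : EuclideanSpace ℝ (Fin n)) (K : ℝ)
    (hbdd : ∀ᶠ p : EuclideanSpace ℝ (Fin n) × ℝ in (nhds x) ×ˢ (nhdsWithin 0 (Set.Ioi 0)),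
      (f (p.1 + p.2 • v) - f p.1) / p.2 ≤ K)
    (hfreq : ∀ ε : ℝ, 0 < ε → ∀ᶠ t in nhdsWithin (0:ℝ) (Set.Ioi 0),
      -ε ≤ (f (x + t • v) - f x) / t) :
    0 ≤ clarkeDirDeriv f x v := by
  have hB : IsBoundedUnder (· ≤ ·) ((nhds x) ×ˢ (nhdsWithin (0:ℝ) (Set.Ioi 0)))
      (fun p : EuclideanSpace ℝ (Fin n) × ℝ => (f (p.1 + p.2 • v) - f p.1) / p.2) :=
    ⟨K, eventually_map.2 hbdd⟩
  have hmain : ∀ ε : ℝ, 0 < ε → -ε ≤ clarkeDirDeriv f x v := by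
    intro ε hε
    have htd : Filter.Tendsto (fun t : ℝ => ((x : EuclideanSpace ℝ (Fin n)), t))
        (nhdsWithin (0:ℝ) (Set.Ioi 0)) ((nhds x) ×ˢ (nhdsWithin (0:ℝ) (Set.Ioi 0))) :=
      Filter.Tendsto.prodMk tendsto_const_nhds tendsto_id
    have hfr : ∃ᶠ p : EuclideanSpace ℝ (Fin n) × ℝ in
        (nhds x) ×ˢ (nhdsWithin (0:ℝ) (Set.Ioi 0)),
        -ε ≤ (f (p.1 + p.2 • v) - f p.1) / p.2 :=
      htd.frequently ((hfreq ε hε).frequently)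
    exact le_limsup_of_frequently_le hfr hB
  by_contra hc
  push_neg at hc
  have := hmain (-(clarkeDirDeriv f x v) / 2) (by linarith)
  linarith

set_option maxHeartbeats 2000000 in
/-- with `y₁⋯y_n ≠ 0` and `d ≥ 2`, any `x ≠ 0` satisfying
`Σᵢ |yᵢ|·(xᵢ/yᵢ) = 0` and all product-ratio constraints `≤ 1` is a Clarke first-order
stationary point of `f₁`, but not a local minimum of `f₁`. -/
theorem stmt_17 {n d : ℕ} (hd : 2 ≤ d) (y x : EuclideanSpace ℝ (Fin n))
    (hy : (∏ i : Fin n, y i) ≠ 0) (hx0 : x ≠ 0)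
    (hsum : (∑ i : Fin n, |y i| * (x i / y i)) = 0)
    (hratio : ∀ i : Fin d → Fin n,
      (∏ k : Fin d, x (i k)) / (∏ k : Fin d, y (i k)) ≤ 1) :
    ((0 : EuclideanSpace ℝ (Fin n)) ∈
        clarkeSubdiff (fun z : EuclideanSpace ℝ (Fin n) =>
          ∑ i : Fin d → Fin n, |(∏ k : Fin d, z (i k)) - ∏ k : Fin d, y (i k)|) x) ∧
      ¬ ∃ ε > 0, ∀ z : EuclideanSpace ℝ (Fin n), ‖x - z‖ ≤ ε →
          (∑ i : Fin d → Fin n, |(∏ k : Fin d, x (i k)) - ∏ k : Fin d, y (i k)|) ≤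
            ∑ i : Fin d → Fin n, |(∏ k : Fin d, z (i k)) - ∏ k : Fin d, y (i k)| := by
  classical
  have hyj : ∀ j : Fin n, y j ≠ 0 := fun j => Finset.prod_ne_zero_iff.mp hy j (Finset.mem_univ j)
  have hd0 : d ≠ 0 := by omega
  have hsx : (∑ j : Fin n, |y j| / y j * x j) = 0 := by
    rw [← hsum]
    exact Finset.sum_congr rfl fun j _ => by ring
  have hfx : (∑ i : Fin d → Fin n, |(∏ k : Fin d, x (i k)) - ∏ k : Fin d, y (i k)|)
      = ∑ i : Fin d → Fin n, |∏ k : Fin d, y (i k)| := by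
    rw [f_eq y hyj x hratio, hsx, zero_pow hd0, sub_zero]
  constructor
  · -- stationarity
    simp only [clarkeSubdiff, Set.mem_setOf_eq]
    intro v
    have h0 : (inner ℝ v (0 : EuclideanSpace ℝ (Fin n)) : ℝ) = 0 := by simp
    rw [h0]
    set M : ℝ := ‖x‖ + ‖v‖ + 2 with hMdef
    have hM1 : (1:ℝ) ≤ M := by
      have := norm_nonneg x; have := norm_nonneg v
      simp only [hMdef]; linarith
    apply stationary_aux _ x v ((n:ℝ)^d * (M^d * ((d:ℝ) * ‖v‖)))
    · -- boundedness
      apply Filter.eventually_of_mem (Filter.prod_mem_prod (Metric.ball_mem_nhds x one_pos)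
        (Ioo_mem_nhdsGT_of_mem ⟨le_refl (0:ℝ), one_pos⟩))
      rintro p hp
      obtain ⟨hp1, hp2⟩ := Set.mem_prod.mp hp
      have hnb : ‖p.1 - x‖ < 1 := mem_ball_iff_norm.mp hp1
      have hb1 : ‖p.1‖ ≤ ‖x‖ + 1 := by
        have h := norm_add_le (p.1 - x) x
        rw [sub_add_cancel] at h
        linarith
      have hbm : ∀ m, |p.1 m| ≤ M := by
        intro m
        have := coord_le_norm p.1 m
        have := norm_nonneg v
        simp only [hMdef]; linarith
      have ham : ∀ m, |(p.1 + p.2 • v) m| ≤ M := by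
        intro m
        have hco : (p.1 + p.2 • v) m = p.1 m + p.2 * v m := rfl
        rw [hco]
        have h1 := coord_le_norm p.1 m
        have h2 := coord_le_norm v m
        have h3 := abs_add_le (p.1 m) (p.2 * v m)
        have h4 : |p.2 * v m| = p.2 * |v m| := by rw [abs_mul, abs_of_pos hp2.1]
        have h5 : p.2 * |v m| ≤ 1 * ‖v‖ := by
          apply mul_le_mul hp2.2.le h2 (abs_nonneg _) zero_le_one
        simp only [hMdef]
        linarith
      have hsum_le :
          (∑ i : Fin d → Fin n, |(∏ k : Fin d, (p.1 + p.2 • v) (i k)) - ∏ k : Fin d, y (i k)|)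
            - (∑ i : Fin d → Fin n, |(∏ k : Fin d, p.1 (i k)) - ∏ k : Fin d, y (i k)|)
          ≤ ((n:ℝ)^d * (M^d * ((d:ℝ) * ‖v‖))) * p.2 := by
        rw [← Finset.sum_sub_distrib]
        have hterm : ∀ i : Fin d → Fin n,
            |(∏ k : Fin d, (p.1 + p.2 • v) (i k)) - ∏ k : Fin d, y (i k)|
              - |(∏ k : Fin d, p.1 (i k)) - ∏ k : Fin d, y (i k)|
            ≤ M ^ d * ((d:ℝ) * (p.2 * ‖v‖)) := by
          intro i
          have t1 : |(∏ k : Fin d, (p.1 + p.2 • v) (i k)) - ∏ k : Fin d, y (i k)|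
              - |(∏ k : Fin d, p.1 (i k)) - ∏ k : Fin d, y (i k)|
              ≤ |(∏ k : Fin d, (p.1 + p.2 • v) (i k)) - ∏ k : Fin d, p.1 (i k)| := by
            have h := abs_sub_abs_le_abs_sub
              ((∏ k : Fin d, (p.1 + p.2 • v) (i k)) - ∏ k : Fin d, y (i k))
              ((∏ k : Fin d, p.1 (i k)) - ∏ k : Fin d, y (i k))
            have he : ((∏ k : Fin d, (p.1 + p.2 • v) (i k)) - ∏ k : Fin d, y (i k))
                - ((∏ k : Fin d, p.1 (i k)) - ∏ k : Fin d, y (i k))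
                = (∏ k : Fin d, (p.1 + p.2 • v) (i k)) - ∏ k : Fin d, p.1 (i k) := by ring
            rwa [he] at h
          have t2 := prod_diff_le Finset.univ (fun k => (p.1 + p.2 • v) (i k))
            (fun k => p.1 (i k)) M hM1 (fun k _ => ham (i k)) (fun k _ => hbm (i k))
          rw [Finset.card_univ, Fintype.card_fin] at t2
          have t3 : (∑ k : Fin d, |(p.1 + p.2 • v) (i k) - p.1 (i k)|) ≤ (d:ℝ) * (p.2 * ‖v‖) := by
            have hterm2 : ∀ k : Fin d, |(p.1 + p.2 • v) (i k) - p.1 (i k)| ≤ p.2 * ‖v‖ := by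
              intro k
              have hco : (p.1 + p.2 • v) (i k) - p.1 (i k) = p.2 * v (i k) := by
                have : (p.1 + p.2 • v) (i k) = p.1 (i k) + p.2 * v (i k) := rfl
                rw [this]; ring
              rw [hco, abs_mul, abs_of_pos hp2.1]
              exact mul_le_mul_of_nonneg_left (coord_le_norm v (i k)) hp2.1.le
            calc (∑ k : Fin d, |(p.1 + p.2 • v) (i k) - p.1 (i k)|)
                ≤ ∑ _k : Fin d, p.2 * ‖v‖ := Finset.sum_le_sum fun k _ => hterm2 k
              _ = (d:ℝ) * (p.2 * ‖v‖) := by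
                  rw [Finset.sum_const, Finset.card_univ, Fintype.card_fin, nsmul_eq_mul]
          have hMd0 : (0:ℝ) ≤ M ^ d := pow_nonneg (by linarith) d
          calc |(∏ k : Fin d, (p.1 + p.2 • v) (i k)) - ∏ k : Fin d, y (i k)|
              - |(∏ k : Fin d, p.1 (i k)) - ∏ k : Fin d, y (i k)|
              ≤ |(∏ k : Fin d, (p.1 + p.2 • v) (i k)) - ∏ k : Fin d, p.1 (i k)| := t1
            _ ≤ M ^ d * ∑ k : Fin d, |(p.1 + p.2 • v) (i k) - p.1 (i k)| := t2
            _ ≤ M ^ d * ((d:ℝ) * (p.2 * ‖v‖)) := mul_le_mul_of_nonneg_left t3 hMd0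
        calc (∑ i : Fin d → Fin n,
              (|(∏ k : Fin d, (p.1 + p.2 • v) (i k)) - ∏ k : Fin d, y (i k)|
                - |(∏ k : Fin d, p.1 (i k)) - ∏ k : Fin d, y (i k)|))
            ≤ ∑ _i : Fin d → Fin n, M ^ d * ((d:ℝ) * (p.2 * ‖v‖)) :=
              Finset.sum_le_sum fun i _ => hterm i
          _ = ((n:ℝ)^d * (M^d * ((d:ℝ) * ‖v‖))) * p.2 := by
              rw [Finset.sum_const, Finset.card_univ, Fintype.card_fun, Fintype.card_fin,
                Fintype.card_fin, nsmul_eq_mul]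
              push_cast
              ring
      rw [div_le_iff₀ hp2.1]
      exact hsum_le
    · -- frequently lower bound
      intro ε hε
      set L : ℝ := ∑ j : Fin n, |y j| / y j * v j with hL
      have hL1 : (0:ℝ) < |L|^d + 1 := by positivity
      have hδ0 : 0 < min 1 (ε / (|L|^d + 1)) := lt_min one_pos (div_pos hε hL1)
      apply Filter.eventually_of_mem (Ioo_mem_nhdsGT_of_mem ⟨le_refl (0:ℝ), hδ0⟩)
      intro t ht
      have ht0 : 0 < t := ht.1
      have ht1 : t ≤ 1 := le_trans ht.2.le (min_le_left _ _)
      have ht2 : t * (|L|^d + 1) ≤ ε := by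
        have h := le_trans ht.2.le (min_le_right _ _)
        exact (le_div_iff₀ hL1).mp h
      have hS : (∑ j : Fin n, |y j| / y j * ((x + t • v) j)) = t * L := by
        have hco : ∀ m : Fin n, (x + t • v) m = x m + t * v m := fun m => rfl
        calc (∑ j : Fin n, |y j| / y j * ((x + t • v) j))
            = ∑ j : Fin n, (|y j| / y j * x j + t * (|y j| / y j * v j)) := by
              apply Finset.sum_congr rfl
              intro j _
              rw [hco j]; ring
          _ = (∑ j : Fin n, |y j| / y j * x j) + t * ∑ j : Fin n, |y j| / y j * v j := by
              rw [Finset.sum_add_distrib, Finset.mul_sum]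
          _ = t * L := by rw [hsx, hL]; ring
      have hlb := f_lb (d := d) y hyj (x + t • v)
      rw [hS] at hlb
      have hd1 : d - 1 + 1 = d := by omega
      have hp1 : t ^ (d-1) ≤ t := by
        have h := pow_le_pow_of_le_one ht0.le ht1 (show 1 ≤ d - 1 by omega)
        simpa using h
      have habs : (t*L)^d ≤ t^d * |L|^d := by
        calc (t*L)^d ≤ |(t*L)^d| := le_abs_self _
          _ = (|t| * |L|)^d := by rw [abs_pow, abs_mul]
          _ = t^d * |L|^d := by rw [abs_of_pos ht0, mul_pow]
      have heq : t^d * |L|^d = t * (t^(d-1) * |L|^d) := by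
        rw [show t^d = t^(d-1) * t from by rw [← pow_succ, hd1]]; ring
      have h6 : t * (t^(d-1) * |L|^d) ≤ t * (t * |L|^d) :=
        mul_le_mul_of_nonneg_left
          (mul_le_mul_of_nonneg_right hp1 (pow_nonneg (abs_nonneg L) d)) ht0.le
      have h7 : t * (t * |L|^d) ≤ t * (ε - t) := by
        apply mul_le_mul_of_nonneg_left _ ht0.le
        nlinarith
      have h5 : (t*L)^d ≤ ε * t := by nlinarith [sq_nonneg t]
      show -ε ≤ ((∑ i : Fin d → Fin n, |(∏ k : Fin d, (x + t • v) (i k)) - ∏ k : Fin d, y (i k)|)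
          - ∑ i : Fin d → Fin n, |(∏ k : Fin d, x (i k)) - ∏ k : Fin d, y (i k)|) / t
      rw [le_div_iff₀ ht0, hfx]
      linarith
  · -- not a local minimum
    rintro ⟨ε, hε, hmin⟩
    have hex : ∃ j : Fin n, |y j| / y j * x j < 0 := by
      by_contra hcon
      push_neg at hcon
      have hall := (Finset.sum_eq_zero_iff_of_nonneg (fun j _ => hcon j)).mp hsx
      obtain ⟨j0, hj0⟩ : ∃ j : Fin n, x j ≠ 0 := by
        by_contra hc2
        push_neg at hc2
        apply hx0
        ext m
        exact hc2 m
      have hs0 : |y j0| / y j0 ≠ 0 := div_ne_zero (abs_ne_zero.mpr (hyj j0)) (hyj j0)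
      rcases mul_eq_zero.mp (hall j0 (Finset.mem_univ _)) with h | h
      · exact hs0 h
      · exact hj0 h
    obtain ⟨j, hj⟩ := hex
    have hxj1 : (0:ℝ) < |x j| + 1 := by positivity
    set t : ℝ := min (1/2) (ε / (|x j| + 1)) with htdef
    have ht0 : 0 < t := lt_min (by norm_num) (div_pos hε hxj1)
    have ht1 : t ≤ 1/2 := min_le_left _ _
    set z : EuclideanSpace ℝ (Fin n) := x - t • EuclideanSpace.single j (x j) with hzdef
    have hznorm : ‖x - z‖ ≤ ε := by
      have he : x - z = t • EuclideanSpace.single j (x j) := by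
        rw [hzdef]; abel
      rw [he, norm_smul, EuclideanSpace.norm_single, Real.norm_eq_abs, abs_of_pos ht0,
        Real.norm_eq_abs]
      have h2 : t ≤ ε / (|x j| + 1) := min_le_right _ _
      have h3 : t * (|x j| + 1) ≤ ε := (le_div_iff₀ hxj1).mp h2
      nlinarith [abs_nonneg (x j)]
    have hzco : ∀ m : Fin n, z m = (if m = j then (1 - t) else 1) * x m := by
      intro m
      have h1 : z m = x m - t * (EuclideanSpace.single j (x j)) m := rfl
      rw [h1, EuclideanSpace.single_apply]
      by_cases hm : m = j
      · subst hm; simp; ring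
      · simp [hm]
    have hzratio : ∀ i : Fin d → Fin n,
        (∏ k : Fin d, z (i k)) / (∏ k : Fin d, y (i k)) ≤ 1 := by
      intro i
      have hzprod : (∏ k : Fin d, z (i k))
          = (∏ k : Fin d, (if i k = j then (1 - t) else 1)) * ∏ k : Fin d, x (i k) := by
        rw [← Finset.prod_mul_distrib]
        exact Finset.prod_congr rfl fun k _ => hzco (i k)
      have hC0 : 0 < ∏ k : Fin d, (if i k = j then (1 - t) else (1:ℝ)) :=
        Finset.prod_pos fun k _ => by split <;> [linarith; norm_num]
      have hC1 : (∏ k : Fin d, (if i k = j then (1 - t) else (1:ℝ))) ≤ 1 :=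
        Finset.prod_le_one (fun k _ => by split <;> linarith) (fun k _ => by split <;> linarith)
      rw [hzprod, mul_div_assoc]
      have hr := hratio i
      rcases le_or_gt ((∏ k : Fin d, x (i k)) / (∏ k : Fin d, y (i k))) 0 with h | h
      · nlinarith
      · nlinarith
    have hfz := f_eq y hyj z hzratio
    have hSz : (∑ m : Fin n, |y m| / y m * z m) = -(t * (|y j| / y j * x j)) := by
      calc (∑ m : Fin n, |y m| / y m * z m)
          = ∑ m : Fin n, (|y m| / y m * x m
              + (if m = j then -(t * (|y m| / y m * x m)) else 0)) := by
            apply Finset.sum_congr rfl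
            intro m _
            rw [hzco m]
            by_cases hm : m = j
            · simp only [hm, if_true]; ring
            · simp only [hm, if_false]; ring
        _ = (∑ m : Fin n, |y m| / y m * x m)
              + ∑ m : Fin n, (if m = j then -(t * (|y m| / y m * x m)) else 0) := by
            rw [Finset.sum_add_distrib]
        _ = -(t * (|y j| / y j * x j)) := by
            rw [hsx, Finset.sum_ite_eq' Finset.univ j
              (fun m => -(t * (|y m| / y m * x m)))]
            simp
    have hpos : 0 < -(t * (|y j| / y j * x j)) := by nlinarith
    have hlt : (∑ i : Fin d → Fin n, |(∏ k : Fin d, z (i k)) - ∏ k : Fin d, y (i k)|)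
        < ∑ i : Fin d → Fin n, |(∏ k : Fin d, x (i k)) - ∏ k : Fin d, y (i k)| := by
      rw [hfz, hSz, hfx]
      have hp := pow_pos hpos d
      linarith
    exact absurd (hmin z hznorm) (not_le.mpr hlt)
end

section
/- For weights w₁,…,w_n > 0, the function f(x) = −(Σᵢ wᵢ xᵢ)² is a global function on the box S' = [−1,1]ⁿ: every local minimum of f on S' is a global minimum, and the global minima are exactly x = (1,…,1) and x = (−1,…,−1). -/
section aux19

variable {n : ℕ}

private lemma stmt19_bound (w : Fin n → ℝ) (hw : ∀ i, 0 < w i)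
    (z : EuclideanSpace ℝ (Fin n)) (hz : ∀ i : Fin n, -1 ≤ z i ∧ z i ≤ 1) :
    |∑ i, w i * z i| ≤ ∑ i, w i := by
  calc |∑ i, w i * z i| ≤ ∑ i, |w i * z i| := Finset.abs_sum_le_sum_abs _ _
    _ ≤ ∑ i, w i := by
        refine Finset.sum_le_sum fun i _ => ?_
        rw [abs_mul, abs_of_pos (hw i)]
        have h1 : |z i| ≤ 1 := abs_le.2 (hz i)
        nlinarith [(hw i).le, abs_nonneg (z i)]

private lemma stmt19_corner1 (w : Fin n → ℝ) (hw : ∀ i, 0 < w i)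
    (z : EuclideanSpace ℝ (Fin n)) (hz : ∀ i : Fin n, -1 ≤ z i ∧ z i ≤ 1)
    (hsum : ∑ i, w i * z i = ∑ i, w i) : ∀ i, z i = 1 := by
  intro i
  have h0 : ∑ i, w i * (1 - z i) = 0 := by
    simp only [mul_sub, mul_one, Finset.sum_sub_distrib]
    linarith
  have := (Finset.sum_eq_zero_iff_of_nonneg
    (fun j _ => by nlinarith [(hw j).le, (hz j).2])).1 h0 i (Finset.mem_univ i)
  have hwi := hw i
  nlinarith

private lemma stmt19_corner2 (w : Fin n → ℝ) (hw : ∀ i, 0 < w i)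
    (z : EuclideanSpace ℝ (Fin n)) (hz : ∀ i : Fin n, -1 ≤ z i ∧ z i ≤ 1)
    (hsum : ∑ i, w i * z i = -∑ i, w i) : ∀ i, z i = -1 := by
  intro i
  have h0 : ∑ i, w i * (z i + 1) = 0 := by
    simp only [mul_add, mul_one, Finset.sum_add_distrib]
    linarith
  have := (Finset.sum_eq_zero_iff_of_nonneg
    (fun j _ => by nlinarith [(hw j).le, (hz j).1])).1 h0 i (Finset.mem_univ i)
  have hwi := hw i
  nlinarith

private lemma stmt19_local (w : Fin n → ℝ) (hw : ∀ i, 0 < w i)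
    (x : EuclideanSpace ℝ (Fin n)) (hx : ∀ i : Fin n, -1 ≤ x i ∧ x i ≤ 1)
    (ε : ℝ) (hε : 0 < ε)
    (hloc : ∀ z : EuclideanSpace ℝ (Fin n), (∀ i : Fin n, -1 ≤ z i ∧ z i ≤ 1) →
      ‖x - z‖ ≤ ε → -(∑ i, w i * x i) ^ 2 ≤ -(∑ i, w i * z i) ^ 2) :
    (∑ i, w i * x i) ^ 2 = (∑ i, w i) ^ 2 := by
  set W := ∑ i, w i with hWdef
  set c := ∑ i, w i * x i with hcdef
  have habs : |c| ≤ W := stmt19_bound w hw x hx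
  -- choose the corner matching the sign of c
  obtain ⟨e, he, hd, hcd⟩ : ∃ e : EuclideanSpace ℝ (Fin n),
      (∀ i : Fin n, -1 ≤ e i ∧ e i ≤ 1) ∧
      (∑ i, w i * e i) ^ 2 = W ^ 2 ∧ c ^ 2 ≤ c * ∑ i, w i * e i := by
    rcases le_or_gt 0 c with hc | hc
    · refine ⟨WithLp.toLp 2 (fun _ => 1 : Fin n → ℝ), fun i => by norm_num, ?_, ?_⟩
      · simp [hWdef]
      · simp only [WithLp.ofLp_toLp]
        have : ∑ i, w i * (1:ℝ) = W := by simp [hWdef]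
        rw [this]
        have : c ≤ W := (abs_le.1 habs).2
        nlinarith
    · refine ⟨WithLp.toLp 2 (fun _ => -1 : Fin n → ℝ), fun i => by norm_num, ?_, ?_⟩
      · simp only [WithLp.ofLp_toLp]
        have : ∑ i, w i * (-1:ℝ) = -W := by simp [hWdef, Finset.sum_neg_distrib]
        rw [show (fun i => w i * ((fun _ => (-1:ℝ)) i)) = fun i => w i * (-1) from rfl] at *
        rw [this]; ring
      · simp only [WithLp.ofLp_toLp]
        have h1 : ∑ i, w i * ((fun _ => (-1:ℝ)) i) = -W := by simp [hWdef]
        rw [h1]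
        have : -W ≤ c := (abs_le.1 habs).1
        nlinarith
  set d := ∑ i, w i * e i with hddef
  set D := ‖e - x‖ with hDdef
  rcases eq_or_lt_of_le (norm_nonneg (e - x)) with hD0 | hD0
  · -- e = x, so c = d
    have : e - x = 0 := by rwa [eq_comm, norm_eq_zero] at hD0
    have hex : e = x := by rwa [sub_eq_zero] at this
    rw [← hd, hddef, hex]
  · -- perturb
    set t := min (ε / D) 1 with htdef
    have ht0 : 0 < t := lt_min (div_pos hε hD0) one_pos
    have ht1 : t ≤ 1 := min_le_right _ _
    have htD : t * D ≤ ε := by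
      have : t ≤ ε / D := min_le_left _ _
      calc t * D ≤ (ε / D) * D := by nlinarith
        _ = ε := div_mul_cancel₀ _ (ne_of_gt hD0)
    set z : EuclideanSpace ℝ (Fin n) := x + t • (e - x) with hzdef
    have hz_apply : ∀ i, z i = x i + t * (e i - x i) := by
      intro i
      simp [hzdef, PiLp.add_apply, PiLp.smul_apply, PiLp.sub_apply, smul_eq_mul]
    have hzS : ∀ i : Fin n, -1 ≤ z i ∧ z i ≤ 1 := by
      intro i
      rw [hz_apply i]
      obtain ⟨hx1, hx2⟩ := hx i
      obtain ⟨he1, he2⟩ := he i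
      constructor <;> nlinarith
    have hznorm : ‖x - z‖ ≤ ε := by
      have : x - z = -(t • (e - x)) := by rw [hzdef]; abel
      rw [this, norm_neg, norm_smul, Real.norm_eq_abs, abs_of_pos ht0, ← hDdef]
      exact htD
    have hzsum : ∑ i, w i * z i = (1 - t) * c + t * d := by
      rw [hcdef, hddef, Finset.mul_sum, Finset.mul_sum, ← Finset.sum_add_distrib]
      refine Finset.sum_congr rfl fun i _ => ?_
      rw [hz_apply i]; ring
    have hle := hloc z hzS hznorm
    rw [hzsum] at hle
    -- ((1-t)c + td)^2 ≤ c^2, together with c*d ≥ c^2 forces c = d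
    have h2 : 0 ≤ t * (c * d - c ^ 2) := mul_nonneg ht0.le (by linarith)
    have hsq0 : (d - c) ^ 2 ≤ 0 := by
      nlinarith [mul_pos ht0 ht0, sq_nonneg (d - c)]
    have hcd2 : c = d := by nlinarith [sq_nonneg (d - c)]
    rw [← hd, ← hcd2]

end aux19

/-- for positive weights `w`, the function `f(x) = −(Σᵢ wᵢ xᵢ)²` is a global
function on the box `[−1,1]ⁿ`: every local minimum of `f` on the box is a global minimum,
and the global minima are exactly `(1,…,1)` and `(−1,…,−1)`. -/
theorem stmt_19 {n : ℕ} (w : Fin n → ℝ) (hw : ∀ i, 0 < w i)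
    (S : Set (EuclideanSpace ℝ (Fin n)))
    (hS : S = { x | ∀ i : Fin n, -1 ≤ x i ∧ x i ≤ 1 }) :
    (∀ x ∈ S,
      (∃ ε > 0, ∀ z ∈ S, ‖x - z‖ ≤ ε → -(∑ i, w i * x i) ^ 2 ≤ -(∑ i, w i * z i) ^ 2) →
      ∀ z ∈ S, -(∑ i, w i * x i) ^ 2 ≤ -(∑ i, w i * z i) ^ 2) ∧
    ∀ x ∈ S, ((∀ z ∈ S, -(∑ i, w i * x i) ^ 2 ≤ -(∑ i, w i * z i) ^ 2) ↔
      ((∀ i, x i = 1) ∨ (∀ i, x i = -1))) := by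
  subst hS
  constructor
  · rintro x hx ⟨ε, hε, hloc⟩ z hz
    have hkey := stmt19_local w hw x hx ε hε hloc
    have hb := stmt19_bound w hw z hz
    have : (∑ i, w i * z i) ^ 2 ≤ (∑ i, w i) ^ 2 := by
      have := abs_nonneg (∑ i, w i * z i)
      nlinarith [sq_abs (∑ i, w i * z i)]
    nlinarith
  · intro x hx
    constructor
    · intro hglob
      have hone : (WithLp.toLp 2 (fun _ => 1 : Fin n → ℝ) : EuclideanSpace ℝ (Fin n)) ∈
          { x : EuclideanSpace ℝ (Fin n) | ∀ i : Fin n, -1 ≤ x i ∧ x i ≤ 1 } := by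
        intro i; norm_num
      have h1 := hglob _ hone
      have hW : ∑ i, w i * (WithLp.toLp 2 (fun _ => (1:ℝ)) : EuclideanSpace ℝ (Fin n)) i = ∑ i, w i := by simp
      rw [hW] at h1
      have hb := stmt19_bound w hw x hx
      have habs : |∑ i, w i * x i| = ∑ i, w i := by
        have h2 : (∑ i, w i) ^ 2 ≤ (∑ i, w i * x i) ^ 2 := by nlinarith
        have hW0 : 0 ≤ ∑ i, w i := Finset.sum_nonneg fun i _ => (hw i).le
        nlinarith [abs_nonneg (∑ i, w i * x i), sq_abs (∑ i, w i * x i)]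
      rcases abs_eq (Finset.sum_nonneg fun i (_ : i ∈ Finset.univ) => (hw i).le) |>.1 habs with h | h
      · exact Or.inl (stmt19_corner1 w hw x hx h)
      · exact Or.inr (stmt19_corner2 w hw x hx h)
    · rintro (h | h) z hz
      · have : ∑ i, w i * x i = ∑ i, w i := by
          refine Finset.sum_congr rfl fun i _ => by rw [h i, mul_one]
        rw [this]
        have hb := stmt19_bound w hw z hz
        nlinarith [sq_abs (∑ i, w i * z i), abs_nonneg (∑ i, w i * z i),
          Finset.sum_nonneg fun i (_ : i ∈ Finset.univ) => (hw i).le]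
      · have : ∑ i, w i * x i = -∑ i, w i := by
          rw [← Finset.sum_neg_distrib]
          refine Finset.sum_congr rfl fun i _ => by rw [h i]; ring
        rw [this]
        have hb := stmt19_bound w hw z hz
        nlinarith [sq_abs (∑ i, w i * z i), abs_nonneg (∑ i, w i * z i),
          Finset.sum_nonneg fun i (_ : i ∈ Finset.univ) => (hw i).le]
end
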